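/- arXiv:2603.03720 — 10 statements merged into one kernel-verified Lean document; each statement's English description precedes it below -/
import Mathlib

section
/- Let X be a non-negative real random variable on a probability space, let α > 0 and A ≥ 0. If lim_{λ→+∞} λ^α · E[e^{-λX}] = A, then lim_{ε→0+} ε^{-α} · P(X ≤ ε) = A / Γ(1+α), where Γ is the Gamma function. -/
/-! Karamata's Tauberian argument. Scaling `λ ↦ kλ` turns the hypothesis into
`λ^α E[e^{-kλX}] → A k^{-α} = A / Γ(α) * ∫₀^∞ e^{-kt} t^{α-1} dt` for every `k ≥ 1`. By linearity,
and then by Weierstrass approximation, `λ^α E[g(e^{-λX})] → A / Γ(α) * ∫₀^∞ g(e^{-t}) t^{α-1} dt`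
for every `g(u) = u φ(u)` with `φ` continuous. The indicator of `u ≥ e^{-1}`, which turns
`E[g(e^{-λX})]` into `P(X ≤ 1/λ)`, is squeezed between such `g` whose limits are arbitrarily close
to `A / Γ(α) / α = A / Γ(1 + α)`. -/

open MeasureTheory Filter Set Topology Real

lemma tendsto_of_forall_approx {β E : Type*} [PseudoMetricSpace E] {l : Filter β}
    {f : β → E} {L : E}
    (h : ∀ ε > 0, ∃ g : β → E, ∃ L', Tendsto g l (𝓝 L') ∧ dist L' L ≤ ε ∧
      ∀ᶠ x in l, dist (f x) (g x) ≤ ε) :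
    Tendsto f l (𝓝 L) := by
  refine Metric.tendsto_nhds.2 fun ε hε => ?_
  obtain ⟨g, L', hg, hL', hfg⟩ := h (ε / 3) (by positivity)
  filter_upwards [hfg, Metric.tendsto_nhds.1 hg (ε / 3) (by positivity)] with x hfx hgx
  calc dist (f x) L ≤ dist (f x) (g x) + dist (g x) L' + dist L' L := dist_triangle4 _ _ _ _
    _ < ε := by linarith

lemma exp_neg_mem_Icc {t : ℝ} (ht : 0 ≤ t) : exp (-t) ∈ Icc (0 : ℝ) 1 :=
  ⟨(exp_pos _).le, exp_le_one_iff.2 (neg_nonpos.2 ht)⟩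

lemma integrable_exp_neg_mul_comp {Ω : Type*} [MeasurableSpace Ω] {P : Measure Ω}
    [IsFiniteMeasure P] {s : Ω → ℝ} (hs : Measurable s) (hs₀ : ∀ᵐ ω ∂P, 0 ≤ s ω)
    {φ : ℝ → ℝ} (hφ : Continuous φ) :
    Integrable (fun ω => exp (-s ω) * φ (exp (-s ω))) P := by
  obtain ⟨C, hC⟩ := isCompact_Icc.exists_bound_of_continuousOn (s := Icc (0 : ℝ) 1)
    (continuous_id.mul hφ).continuousOn
  refine .of_bound ((continuous_id.mul hφ).measurable.comp
    (measurable_exp.comp hs.neg)).aestronglyMeasurable C ?_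
  filter_upwards [hs₀] with ω hω using hC _ (exp_neg_mem_Icc hω)

noncomputable def gammaTransform (α : ℝ) (φ : ℝ → ℝ) : ℝ :=
  ∫ t in Ioi 0, exp (-t) * φ (exp (-t)) * t ^ (α - 1)

section GammaTransform

variable {α : ℝ}

lemma integrableOn_gammaTransform (hα : 0 < α) {φ : ℝ → ℝ} (hφ : Continuous φ) :
    IntegrableOn (fun t => exp (-t) * φ (exp (-t)) * t ^ (α - 1)) (Ioi 0) := by
  obtain ⟨C, hC⟩ := isCompact_Icc.exists_bound_of_continuousOn (s := Icc (0 : ℝ) 1)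
    hφ.continuousOn
  refine ((GammaIntegral_convergent hα).bdd_mul (c := C)
    (hφ.comp (continuous_exp.comp continuous_neg)).aestronglyMeasurable ?_).congr
    (ae_of_all _ fun t => by simp only [Function.comp_apply]; ring)
  exact (ae_restrict_iff' measurableSet_Ioi).2
    (ae_of_all _ fun t ht => hC _ (exp_neg_mem_Icc (le_of_lt ht)))

lemma gammaTransform_add (hα : 0 < α) {φ ψ : ℝ → ℝ} (hφ : Continuous φ) (hψ : Continuous ψ) :
    gammaTransform α (φ + ψ) = gammaTransform α φ + gammaTransform α ψ := by
  rw [gammaTransform, gammaTransform, gammaTransform,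
    ← integral_add (integrableOn_gammaTransform hα hφ) (integrableOn_gammaTransform hα hψ)]
  simp only [Pi.add_apply, mul_add, add_mul]

lemma gammaTransform_const_mul (a : ℝ) (φ : ℝ → ℝ) :
    gammaTransform α (fun u => a * φ u) = a * gammaTransform α φ := by
  rw [gammaTransform, gammaTransform, ← integral_const_mul]
  congr 1 with t
  ring

lemma gammaTransform_pow (hα : 0 < α) (n : ℕ) :
    gammaTransform α (· ^ n) = ((n : ℝ) + 1) ^ (-α) * Gamma α := by
  have hexp (t : ℝ) : exp (-t) * exp (-t) ^ n = exp (-(((n : ℝ) + 1) * t)) := by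
    rw [← exp_nat_mul, ← exp_add]; ring_nf
  simp only [gammaTransform, hexp, mul_comm _ (_ ^ (α - 1))]
  rw [integral_rpow_mul_exp_neg_mul_Ioi hα (by positivity), one_div,
    inv_rpow (by positivity), rpow_neg (by positivity)]

lemma abs_gammaTransform_sub_le (hα : 0 < α) {φ ψ : ℝ → ℝ} (hφ : Continuous φ)
    (hψ : Continuous ψ) {δ : ℝ} (hδ : ∀ u ∈ Icc (0 : ℝ) 1, |φ u - ψ u| ≤ δ) :
    |gammaTransform α φ - gammaTransform α ψ| ≤ δ * Gamma α := by
  rw [gammaTransform, gammaTransform, ← integral_sub (integrableOn_gammaTransform hα hφ)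
    (integrableOn_gammaTransform hα hψ), Gamma_eq_integral hα, ← integral_const_mul,
    ← Real.norm_eq_abs]
  refine norm_integral_le_of_norm_le ((GammaIntegral_convergent hα).const_mul δ)
    ((ae_restrict_iff' measurableSet_Ioi).2 (ae_of_all _ fun t ht => ?_))
  have ht : 0 < t := ht
  rw [← sub_mul, ← mul_sub, norm_mul, norm_mul, norm_of_nonneg (exp_pos _).le,
    norm_of_nonneg (rpow_nonneg ht.le _), Real.norm_eq_abs]
  calc _ ≤ exp (-t) * δ * t ^ (α - 1) := by gcongr; exact hδ _ (exp_neg_mem_Icc ht.le)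
    _ = _ := by ring

lemma integral_indicator_Iic_mul_rpow (hα : 0 < α) {T : ℝ} (hT : 0 < T) :
    IntegrableOn (fun t => (Iic T).indicator 1 t * t ^ (α - 1)) (Ioi 0) ∧
      ∫ t in Ioi 0, (Iic T).indicator 1 t * t ^ (α - 1) = T ^ α / α := by
  have hind : (fun t => (Iic T).indicator 1 t * t ^ (α - 1)) =
      (Iic T).indicator fun t => t ^ (α - 1) := by
    ext t
    by_cases ht : t ∈ Iic T <;> simp [ht]
  rw [hind, IntegrableOn, integrable_indicator_iff measurableSet_Iic, integral_indicator
    measurableSet_Iic, IntegrableOn, Measure.restrict_restrict measurableSet_Iic,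
    inter_comm, Ioi_inter_Iic]
  refine ⟨(intervalIntegrable_iff_integrableOn_Ioc_of_le hT.le).1
    (intervalIntegral.intervalIntegrable_rpow' (by linarith)), ?_⟩
  rw [← intervalIntegral.integral_of_le hT.le, integral_rpow (.inl (by linarith)),
    sub_add_cancel, zero_rpow hα.ne', sub_zero]

end GammaTransform

noncomputable def scaledLaplace {Ω : Type*} [MeasurableSpace Ω] (P : Measure Ω) (X : Ω → ℝ)
    (α lam : ℝ) (φ : ℝ → ℝ) : ℝ :=
  lam ^ α * ∫ ω, exp (-(lam * X ω)) * φ (exp (-(lam * X ω))) ∂P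

section ScaledLaplace

variable {Ω : Type*} [MeasurableSpace Ω] {P : Measure Ω} {X : Ω → ℝ} {α A lam : ℝ}

lemma integrable_exp_neg_mul_comp_mul [IsFiniteMeasure P] (hXm : Measurable X)
    (hX : ∀ᵐ ω ∂P, 0 ≤ X ω) (hlam : 0 ≤ lam) {φ : ℝ → ℝ} (hφ : Continuous φ) :
    Integrable (fun ω => exp (-(lam * X ω)) * φ (exp (-(lam * X ω)))) P :=
  integrable_exp_neg_mul_comp (hXm.const_mul lam)
    (by filter_upwards [hX] with ω hω using mul_nonneg hlam hω) hφ

lemma scaledLaplace_add [IsFiniteMeasure P] (hXm : Measurable X)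
    (hX : ∀ᵐ ω ∂P, 0 ≤ X ω) (hlam : 0 ≤ lam)
    {φ ψ : ℝ → ℝ} (hφ : Continuous φ) (hψ : Continuous ψ) :
    scaledLaplace P X α lam (φ + ψ) = scaledLaplace P X α lam φ + scaledLaplace P X α lam ψ := by
  rw [scaledLaplace, scaledLaplace, scaledLaplace, ← mul_add, ← integral_add
    (integrable_exp_neg_mul_comp_mul hXm hX hlam hφ)
    (integrable_exp_neg_mul_comp_mul hXm hX hlam hψ)]
  simp only [Pi.add_apply, mul_add]

lemma scaledLaplace_const_mul (a : ℝ) (φ : ℝ → ℝ) :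
    scaledLaplace P X α lam (fun u => a * φ u) = a * scaledLaplace P X α lam φ := by
  simp only [scaledLaplace, mul_left_comm _ a, integral_const_mul]

lemma abs_scaledLaplace_sub_le [IsFiniteMeasure P] (hXm : Measurable X)
    (hX : ∀ᵐ ω ∂P, 0 ≤ X ω) (hlam : 0 ≤ lam)
    {φ ψ : ℝ → ℝ} (hφ : Continuous φ) (hψ : Continuous ψ) {δ : ℝ}
    (hδ : ∀ u ∈ Icc (0 : ℝ) 1, |φ u - ψ u| ≤ δ) :
    |scaledLaplace P X α lam φ - scaledLaplace P X α lam ψ| ≤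
      δ * scaledLaplace P X α lam fun _ => 1 := by
  rw [scaledLaplace, scaledLaplace, scaledLaplace, ← mul_sub, abs_mul,
    abs_of_nonneg (rpow_nonneg hlam _), mul_left_comm, ← integral_sub
    (integrable_exp_neg_mul_comp_mul hXm hX hlam hφ)
    (integrable_exp_neg_mul_comp_mul hXm hX hlam hψ),
    ← integral_const_mul, ← Real.norm_eq_abs]
  refine mul_le_mul_of_nonneg_left (norm_integral_le_of_norm_le
    ((integrable_exp_neg_mul_comp_mul hXm hX hlam continuous_const).const_mul δ) ?_)
    (rpow_nonneg hlam _)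
  filter_upwards [hX] with ω hω
  rw [← mul_sub, norm_mul, norm_of_nonneg (exp_pos _).le, Real.norm_eq_abs, mul_one, mul_comm δ]
  gcongr
  exact hδ _ (exp_neg_mem_Icc (mul_nonneg hlam hω))

lemma tendsto_scaledLaplace_pow
    (h : Tendsto (fun lam : ℝ => lam ^ α * ∫ ω, exp (-lam * X ω) ∂P) atTop (𝓝 A)) (n : ℕ) :
    Tendsto (fun lam => scaledLaplace P X α lam (· ^ n)) atTop (𝓝 (((n : ℝ) + 1) ^ (-α) * A)) := by
  have hk : 0 < (n : ℝ) + 1 := by positivity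
  refine ((h.comp (tendsto_id.const_mul_atTop hk)).const_mul _).congr' ?_
  filter_upwards [eventually_ge_atTop 0] with lam hlam
  have hexp (ω : Ω) : exp (-(((n : ℝ) + 1) * lam) * X ω) =
      exp (-(lam * X ω)) * exp (-(lam * X ω)) ^ n := by
    rw [← exp_nat_mul, ← exp_add]; ring_nf
  simp only [Function.comp_apply, id, scaledLaplace, hexp]
  rw [mul_rpow hk.le hlam, ← mul_assoc, ← mul_assoc, ← rpow_add hk, neg_add_cancel, rpow_zero,
    one_mul]

end ScaledLaplace

section Karamata

variable {Ω : Type*} [MeasurableSpace Ω] {P : Measure Ω} [IsFiniteMeasure P] {X : Ω → ℝ}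
  {α A : ℝ}

lemma tendsto_scaledLaplace_polynomial (hXm : Measurable X) (hX : ∀ᵐ ω ∂P, 0 ≤ X ω)
    (hα : 0 < α) (h : Tendsto (fun lam : ℝ => lam ^ α * ∫ ω, exp (-lam * X ω) ∂P) atTop (𝓝 A))
    (p : Polynomial ℝ) :
    Tendsto (fun lam => scaledLaplace P X α lam fun u => p.eval u) atTop
      (𝓝 (A / Gamma α * gammaTransform α fun u => p.eval u)) := by
  induction p using Polynomial.induction_on' with
  | add p q hp hq =>
    have hadd : (fun u => (p + q).eval u) = (fun u => p.eval u) + fun u => q.eval u := by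
      ext u; simp
    rw [hadd, gammaTransform_add hα p.continuous q.continuous, mul_add]
    refine (hp.add hq).congr' ?_
    filter_upwards [eventually_ge_atTop 0] with lam hlam
    rw [scaledLaplace_add hXm hX hlam p.continuous q.continuous]
  | monomial n a =>
    simp only [Polynomial.eval_monomial]
    have hΓ := (Gamma_pos_of_pos hα).ne'
    have hlim : A / Gamma α * gammaTransform α (fun u => a * u ^ n) =
        a * (((n : ℝ) + 1) ^ (-α) * A) := by
      rw [gammaTransform_const_mul, gammaTransform_pow hα]
      field_simp
    rw [hlim]
    simpa only [scaledLaplace_const_mul] using (tendsto_scaledLaplace_pow h n).const_mul a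

lemma tendsto_scaledLaplace (hXm : Measurable X) (hX : ∀ᵐ ω ∂P, 0 ≤ X ω) (hα : 0 < α)
    (h : Tendsto (fun lam : ℝ => lam ^ α * ∫ ω, exp (-lam * X ω) ∂P) atTop (𝓝 A))
    {φ : ℝ → ℝ} (hφ : Continuous φ) :
    Tendsto (fun lam => scaledLaplace P X α lam φ) atTop
      (𝓝 (A / Gamma α * gammaTransform α φ)) := by
  have hone : Tendsto (fun lam => scaledLaplace P X α lam fun _ => 1) atTop (𝓝 A) := by
    simpa only [scaledLaplace, mul_one, neg_mul] using h
  refine tendsto_of_forall_approx fun ε hε => ?_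
  have hΓ := Gamma_pos_of_pos hα
  set K := |A| + 1 + |A / Gamma α| * Gamma α with hK_def
  have hK : 0 < K := by positivity
  obtain ⟨p, hp⟩ := exists_polynomial_near_of_continuousOn 0 1 φ hφ.continuousOn (ε / K)
    (by positivity)
  refine ⟨fun lam => scaledLaplace P X α lam fun u => p.eval u, _,
    tendsto_scaledLaplace_polynomial hXm hX hα h p, ?_, ?_⟩
  · rw [dist_eq, ← mul_sub, abs_mul]
    calc |A / Gamma α| * |gammaTransform α (fun u => p.eval u) - gammaTransform α φ|
        ≤ |A / Gamma α| * (ε / K * Gamma α) := by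
          gcongr
          exact abs_gammaTransform_sub_le hα p.continuous hφ fun u hu => (hp u hu).le
      _ ≤ ε / K * K := by
          rw [mul_left_comm]
          gcongr
          linarith [abs_nonneg A]
      _ = ε := div_mul_cancel₀ _ hK.ne'
  · filter_upwards [eventually_ge_atTop 0, hone.eventually_lt_const
      ((le_abs_self A).trans_lt (lt_add_one _))] with lam hlam hbound
    rw [dist_eq]
    calc _ ≤ ε / K * scaledLaplace P X α lam fun _ => 1 :=
          abs_scaledLaplace_sub_le hXm hX hlam hφ p.continuous fun u hu => by
            rw [abs_sub_comm]; exact (hp u hu).le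
      _ ≤ ε / K * K := by
          gcongr
          linarith [mul_nonneg (abs_nonneg (A / Gamma α)) hΓ.le]
      _ = ε := div_mul_cancel₀ _ hK.ne'

end Karamata

/-- `u * cutoff S T u` is the continuous ramp from `0` at `e^{-T}` to `1` at `e^{-S}`. -/
noncomputable def cutoff (S T u : ℝ) : ℝ :=
  min 1 (max 0 ((u - exp (-T)) / (exp (-S) - exp (-T)))) / max u (exp (-T))

section Cutoff

variable {S T : ℝ}

lemma continuous_cutoff (S T : ℝ) : Continuous (cutoff S T) :=
  (continuous_const.min (continuous_const.max
    ((continuous_id.sub continuous_const).div_const _))).div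
    (continuous_id.max continuous_const)
    fun _ => ((exp_pos _).trans_le (le_max_right _ _)).ne'

lemma indicator_Iic_le_exp_mul_cutoff (hST : S < T) (t : ℝ) :
    (Iic S).indicator 1 t ≤ exp (-t) * cutoff S T (exp (-t)) := by
  by_cases ht : t ≤ S
  · have hST' : exp (-T) < exp (-S) := exp_lt_exp.2 (neg_lt_neg hST)
    have htS : exp (-S) ≤ exp (-t) := exp_le_exp.2 (neg_le_neg ht)
    have hramp : min 1 (max 0 ((exp (-t) - exp (-T)) / (exp (-S) - exp (-T)))) = 1 :=
      min_eq_left (le_max_of_le_right ((one_le_div (sub_pos.2 hST')).2 (by linarith)))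
    rw [indicator_of_mem (mem_Iic.2 ht), cutoff, hramp, max_eq_left (hST'.le.trans htS),
      Pi.one_apply, mul_one_div_cancel (exp_pos _).ne']
  · rw [indicator_of_notMem (by simpa using ht), cutoff]
    positivity

lemma exp_mul_cutoff_le_indicator_Iic (hST : S < T) (t : ℝ) :
    exp (-t) * cutoff S T (exp (-t)) ≤ (Iic T).indicator 1 t := by
  by_cases ht : t ≤ T
  · have hmax : max (exp (-t)) (exp (-T)) = exp (-t) :=
      max_eq_left (exp_le_exp.2 (neg_le_neg ht))
    rw [indicator_of_mem (mem_Iic.2 ht), cutoff, hmax, mul_div_cancel₀ _ (exp_pos _).ne']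
    exact min_le_left _ _
  · have hST' : exp (-T) < exp (-S) := exp_lt_exp.2 (neg_lt_neg hST)
    have hTt : exp (-t) < exp (-T) := exp_lt_exp.2 (neg_lt_neg (not_le.1 ht))
    have hramp : max 0 ((exp (-t) - exp (-T)) / (exp (-S) - exp (-T))) = 0 :=
      max_eq_left (div_nonpos_of_nonpos_of_nonneg (by linarith) (by linarith))
    rw [indicator_of_notMem (by simpa using ht), cutoff, hramp, min_eq_right zero_le_one,
      zero_div, mul_zero]

variable {α : ℝ}

lemma gammaTransform_cutoff_le (hα : 0 < α) (hST : S < T) (hT : 0 < T) :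
    gammaTransform α (cutoff S T) ≤ T ^ α / α := by
  obtain ⟨hint, hval⟩ := integral_indicator_Iic_mul_rpow hα hT
  rw [← hval]
  exact setIntegral_mono_on (integrableOn_gammaTransform hα (continuous_cutoff S T)) hint
    measurableSet_Ioi fun t ht => mul_le_mul_of_nonneg_right
      (exp_mul_cutoff_le_indicator_Iic hST t) (rpow_nonneg (le_of_lt ht) _)

lemma le_gammaTransform_cutoff (hα : 0 < α) (hS : 0 < S) (hST : S < T) :
    S ^ α / α ≤ gammaTransform α (cutoff S T) := by
  obtain ⟨hint, hval⟩ := integral_indicator_Iic_mul_rpow hα hS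
  rw [← hval]
  exact setIntegral_mono_on hint (integrableOn_gammaTransform hα (continuous_cutoff S T))
    measurableSet_Ioi fun t ht => mul_le_mul_of_nonneg_right
      (indicator_Iic_le_exp_mul_cutoff hST t) (rpow_nonneg (le_of_lt ht) _)

end Cutoff

section Sandwich

variable {Ω : Type*} [MeasurableSpace Ω] {P : Measure Ω} {X : Ω → ℝ} {α A lam : ℝ}

lemma measure_le_inv_eq_integral (hXm : Measurable X) (hlam : 0 < lam) :
    (P {ω | X ω ≤ lam⁻¹}).toReal = ∫ ω, (Iic 1).indicator 1 (lam * X ω) ∂P := by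
  have hset : {ω | X ω ≤ lam⁻¹} = (fun ω => lam * X ω) ⁻¹' Iic 1 := by
    ext ω
    show X ω ≤ lam⁻¹ ↔ lam * X ω ≤ 1
    rw [← one_div, le_div_iff₀' hlam]
  rw [hset, ← measureReal_def, ← integral_indicator_one (hXm.const_mul lam measurableSet_Iic)]
  rfl

lemma integrable_indicator_Iic_mul [IsFiniteMeasure P] (hXm : Measurable X) (lam : ℝ) :
    Integrable (fun ω => (Iic 1).indicator (1 : ℝ → ℝ) (lam * X ω)) P :=
  .of_bound (((measurable_one (α := ℝ)).indicator measurableSet_Iic).comp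
    (hXm.const_mul lam)).aestronglyMeasurable 1
    (ae_of_all _ fun _ => norm_indicator_le_norm_self _ _ |>.trans_eq norm_one)

lemma scaledLaplace_cutoff_le [IsFiniteMeasure P] (hXm : Measurable X)
    (hX : ∀ᵐ ω ∂P, 0 ≤ X ω) (hlam : 0 < lam)
    {S : ℝ} (hS : S < 1) :
    scaledLaplace P X α lam (cutoff S 1) ≤ lam ^ α * (P {ω | X ω ≤ lam⁻¹}).toReal := by
  rw [scaledLaplace, measure_le_inv_eq_integral hXm hlam]
  exact mul_le_mul_of_nonneg_left (integral_mono
    (integrable_exp_neg_mul_comp_mul hXm hX hlam.le (continuous_cutoff S 1))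
    (integrable_indicator_Iic_mul hXm lam) fun ω => exp_mul_cutoff_le_indicator_Iic hS _)
    (rpow_nonneg hlam.le _)

lemma le_scaledLaplace_cutoff [IsFiniteMeasure P] (hXm : Measurable X)
    (hX : ∀ᵐ ω ∂P, 0 ≤ X ω) (hlam : 0 < lam)
    {T : ℝ} (hT : 1 < T) :
    lam ^ α * (P {ω | X ω ≤ lam⁻¹}).toReal ≤ scaledLaplace P X α lam (cutoff 1 T) := by
  rw [scaledLaplace, measure_le_inv_eq_integral hXm hlam]
  exact mul_le_mul_of_nonneg_left (integral_mono (integrable_indicator_Iic_mul hXm lam)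
    (integrable_exp_neg_mul_comp_mul hXm hX hlam.le (continuous_cutoff 1 T))
    fun ω => indicator_Iic_le_exp_mul_cutoff hT _) (rpow_nonneg hlam.le _)

lemma tendsto_mul_rpow_div (hα : 0 < α) (c : ℝ) :
    Tendsto (fun T => c * (T ^ α / α)) (𝓝 1) (𝓝 (c / α)) :=
  (continuous_const.mul ((continuous_id.rpow_const fun _ => .inr hα.le).div_const α)).tendsto'
    1 _ (by simp [div_eq_mul_inv])

lemma eventually_rpow_mul_measure_le_inv_lt [IsFiniteMeasure P] (hXm : Measurable X)
    (hX : ∀ᵐ ω ∂P, 0 ≤ X ω) (hα : 0 < α) (hA : 0 ≤ A)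
    (h : Tendsto (fun lam : ℝ => lam ^ α * ∫ ω, exp (-lam * X ω) ∂P) atTop (𝓝 A))
    {u : ℝ} (hu : A / Gamma α / α < u) :
    ∀ᶠ lam in atTop, lam ^ α * (P {ω | X ω ≤ lam⁻¹}).toReal < u := by
  obtain ⟨T, hTu, hT⟩ := (((tendsto_mul_rpow_div hα _).mono_left nhdsWithin_le_nhds).eventually
    (gt_mem_nhds hu)).and self_mem_nhdsWithin |>.exists (f := 𝓝[>] (1 : ℝ))
  have hlim : A / Gamma α * gammaTransform α (cutoff 1 T) < u :=
    (mul_le_mul_of_nonneg_left (gammaTransform_cutoff_le hα hT (zero_lt_one.trans hT))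
      (div_nonneg hA (Gamma_pos_of_pos hα).le)).trans_lt hTu
  filter_upwards [(tendsto_scaledLaplace hXm hX hα h (continuous_cutoff 1 T)).eventually_lt_const
    hlim, eventually_gt_atTop 0] with lam hlt hlam
  exact (le_scaledLaplace_cutoff hXm hX hlam hT).trans_lt hlt

lemma eventually_lt_rpow_mul_measure_le_inv [IsFiniteMeasure P] (hXm : Measurable X)
    (hX : ∀ᵐ ω ∂P, 0 ≤ X ω) (hα : 0 < α) (hA : 0 ≤ A)
    (h : Tendsto (fun lam : ℝ => lam ^ α * ∫ ω, exp (-lam * X ω) ∂P) atTop (𝓝 A))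
    {u : ℝ} (hu : u < A / Gamma α / α) :
    ∀ᶠ lam in atTop, u < lam ^ α * (P {ω | X ω ≤ lam⁻¹}).toReal := by
  obtain ⟨S, hSu, hS⟩ := (((tendsto_mul_rpow_div hα _).mono_left nhdsWithin_le_nhds).eventually
    (lt_mem_nhds hu)).and (Ioo_mem_nhdsLT zero_lt_one) |>.exists (f := 𝓝[<] (1 : ℝ))
  have hlim : u < A / Gamma α * gammaTransform α (cutoff S 1) :=
    hSu.trans_le (mul_le_mul_of_nonneg_left (le_gammaTransform_cutoff hα hS.1 hS.2)
      (div_nonneg hA (Gamma_pos_of_pos hα).le))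
  filter_upwards [(tendsto_scaledLaplace hXm hX hα h (continuous_cutoff S 1)).eventually_const_lt
    hlim, eventually_gt_atTop 0] with lam hlt hlam
  exact hlt.trans_le (scaledLaplace_cutoff_le hXm hX hlam hS.2)

end Sandwich

theorem stmt_0 {Ω : Type*} [MeasurableSpace Ω] (P : Measure Ω) [IsProbabilityMeasure P]
    (X : Ω → ℝ) (hXm : Measurable X) (hX : ∀ᵐ ω ∂P, 0 ≤ X ω)
    (α A : ℝ) (hα : 0 < α) (hA : 0 ≤ A)
    (h : Tendsto (fun lam : ℝ => lam ^ α * ∫ ω, Real.exp (-lam * X ω) ∂P) atTop (nhds A)) :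
    Tendsto (fun ε : ℝ => ε ^ (-α) * (P {ω | X ω ≤ ε}).toReal)
      (nhdsWithin 0 (Set.Ioi 0)) (nhds (A / Real.Gamma (1 + α))) := by
  have hlim : Tendsto (fun lam : ℝ => lam ^ α * (P {ω | X ω ≤ lam⁻¹}).toReal) atTop
      (𝓝 (A / Gamma α / α)) :=
    tendsto_order.2 ⟨fun u hu => eventually_lt_rpow_mul_measure_le_inv hXm hX hα hA h hu,
      fun u hu => eventually_rpow_mul_measure_le_inv_lt hXm hX hα hA h hu⟩
  rw [add_comm, Gamma_add_one hα.ne', mul_comm, ← div_div]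
  refine (hlim.comp tendsto_inv_nhdsGT_zero).congr' ?_
  filter_upwards [self_mem_nhdsWithin] with ε (hε : 0 < ε)
  simp only [Function.comp_apply, inv_inv, inv_rpow hε.le, rpow_neg hε.le]
end

section
/- Let n ≥ 1 be an integer, T > 0, and a_1, ..., a_n ≥ 0. Then ∫_{D^n_T} exp(-∑_{j=1}^n a_j u_j) du_1 ⋯ du_n = T^n · ∑_{m ∈ ℕ^n} (∏_{j=1}^n (-T a_j)^{m_j}) / Γ(n + m_1 + ⋯ + m_n + 1), where the multiple series over m = (m_1, ..., m_n) ∈ ℕ^n converges absolutely. -/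
open MeasureTheory

/-- The open simplex `D^n_T = {u ∈ ℝⁿ : uⱼ > 0 for all j, u₁ + ⋯ + uₙ < T}`. -/
def simplexD (n : ℕ) (T : ℝ) : Set (Fin n → ℝ) :=
  {u | (∀ j, 0 < u j) ∧ ∑ j, u j < T}

/-!
Expanding each factor of `exp (-∑ aⱼ uⱼ) = ∏ exp (-aⱼ uⱼ)` into its power series writes the
integrand as a multiple power series in `u`. Its monomials are integrated by Dirichlet's formula
`∫_{D^n_T} ∏ uⱼ ^ mⱼ du = T ^ (n + |m|) ∏ mⱼ! / (n + |m|)!`, proved by induction on `n`: slicing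
off the first coordinate leaves a Beta integral `∫₀ᵀ x ^ p (T - x) ^ q dx`. The same formula with
`|aⱼ|` in place of `-aⱼ` shows that the series of integrals of absolute values converges, since
`∏ mⱼ! ≤ (n + |m|)!` dominates it by `∏ exp (T |aⱼ|)`; this justifies termwise integration.
-/

open Set
open scoped ENNReal Nat

theorem integral_pow_mul_sub_pow (p q : ℕ) {T : ℝ} (hT : 0 < T) :
    ∫ x in (0 : ℝ)..T, x ^ p * (T - x) ^ q = T ^ (p + q + 1) * p ! * q ! / (p + q + 1)! := by
  have hΓ := Complex.Gamma_mul_Gamma_eq_betaIntegral (s := p + 1) (t := q + 1)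
    (by simp; positivity) (by simp; positivity)
  have hscaled := Complex.betaIntegral_scaled (p + 1) (q + 1) hT
  rw [show (p + 1 : ℂ) + (q + 1) = (p + q + 1 : ℕ) + 1 by push_cast; ring] at hΓ
  rw [show (p + 1 : ℂ) + (q + 1) - 1 = (p + q + 1 : ℕ) by push_cast; ring] at hscaled
  simp only [add_sub_cancel_right, Complex.cpow_natCast, Complex.Gamma_nat_eq_factorial]
    at hΓ hscaled
  apply Complex.ofReal_injective
  rw [← intervalIntegral.integral_ofReal]
  push_cast
  rw [hscaled, eq_div_iff (by exact_mod_cast (p + q + 1).factorial_ne_zero), mul_assoc,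
    mul_assoc, hΓ]
  ring

theorem lintegral_Ioo_pow_mul_sub_pow (p q : ℕ) {T : ℝ} (hT : 0 < T) :
    ∫⁻ x in Ioo 0 T, ENNReal.ofReal (x ^ p * (T - x) ^ q) =
      ENNReal.ofReal (T ^ (p + q + 1) * p ! * q ! / (p + q + 1)!) := by
  have hcont : Continuous fun x : ℝ => x ^ p * (T - x) ^ q := by fun_prop
  rw [← integral_pow_mul_sub_pow p q hT, intervalIntegral.integral_of_le hT.le,
    integral_Ioc_eq_integral_Ioo, ofReal_integral_eq_lintegral_ofReal]
  · exact (hcont.integrableOn_Icc).mono_set Ioo_subset_Icc_self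
  · filter_upwards [ae_restrict_mem measurableSet_Ioo] with x hx
    exact mul_nonneg (pow_nonneg hx.1.le _) (pow_nonneg (sub_nonneg.2 hx.2.le) _)

theorem measurableSet_simplexD (n : ℕ) (T : ℝ) : MeasurableSet (simplexD n T) := by
  unfold simplexD
  measurability

theorem simplexD_zero {T : ℝ} (hT : 0 < T) : simplexD 0 T = univ := by
  simp [simplexD, hT]

theorem cons_mem_simplexD_succ {n : ℕ} {T x : ℝ} {y : Fin n → ℝ} :
    (Fin.cons x y : Fin (n + 1) → ℝ) ∈ simplexD (n + 1) T ↔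
      x ∈ Ioo 0 T ∧ y ∈ simplexD n (T - x) := by
  simp only [simplexD, mem_ofPred_eq, Fin.forall_fin_succ, Fin.sum_univ_succ, Fin.cons_zero,
    Fin.cons_succ, mem_Ioo, lt_sub_iff_add_lt']
  constructor
  · rintro ⟨⟨hx, hy⟩, hsum⟩
    have : 0 ≤ ∑ j, y j := Finset.sum_nonneg fun j _ => (hy j).le
    exact ⟨⟨hx, by linarith⟩, hy, hsum⟩
  · rintro ⟨⟨hx, -⟩, hy, hsum⟩
    exact ⟨⟨hx, hy⟩, hsum⟩

theorem lintegral_simplexD_succ (n : ℕ) (T : ℝ) {F : (Fin (n + 1) → ℝ) → ℝ≥0∞}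
    (hF : Measurable F) :
    ∫⁻ u in simplexD (n + 1) T, F u =
      ∫⁻ x in Ioo 0 T, ∫⁻ y in simplexD n (T - x), F (Fin.cons x y) := by
  let e := MeasurableEquiv.piFinSuccAbove (fun _ : Fin (n + 1) => ℝ) 0
  have he : MeasurePreserving e.symm := (volume_preserving_piFinSuccAbove _ 0).symm
  have hcons : ∀ p, e.symm p = Fin.cons p.1 p.2 := fun p => by
    simp [e, MeasurableEquiv.piFinSuccAbove, Fin.insertNthEquiv_zero]; rfl
  have hslice : ∀ x y, (simplexD (n + 1) T).indicator F (Fin.cons x y) =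
      (Ioo 0 T).indicator
        (fun x => (simplexD n (T - x)).indicator (fun y => F (Fin.cons x y)) y) x := by
    intro x y
    by_cases hx : x ∈ Ioo 0 T <;> by_cases hy : y ∈ simplexD n (T - x) <;>
      simp [Set.indicator, cons_mem_simplexD_succ, hx, hy]
  rw [← lintegral_indicator (measurableSet_simplexD _ _),
    ← he.lintegral_comp_emb e.symm.measurableEmbedding,
    Measure.volume_eq_prod, lintegral_prod (fun p => (simplexD (n + 1) T).indicator F (e.symm p))
      ((hF.indicator (measurableSet_simplexD _ _)).comp e.symm.measurable).aemeasurable,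
    ← lintegral_indicator measurableSet_Ioo]
  congr 1 with x
  by_cases hx : x ∈ Ioo 0 T
  · simp [hcons, hslice, hx, lintegral_indicator (measurableSet_simplexD _ _)]
  · simp [hcons, hslice, hx]

theorem lintegral_simplexD_prod_pow (n : ℕ) (m : Fin n → ℕ) {T : ℝ} (hT : 0 < T) :
    ∫⁻ u in simplexD n T, ENNReal.ofReal (∏ j, u j ^ m j) =
      ENNReal.ofReal (T ^ (n + ∑ j, m j) * (∏ j, ((m j)! : ℝ)) / (n + ∑ j, m j)!) := by
  induction n generalizing T with
  | zero => simp [simplexD_zero hT, volume_pi]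
  | succ n ih =>
    set K := n + ∑ j : Fin n, m j.succ
    have hK : m 0 + K + 1 = n + 1 + ∑ j, m j := by rw [Fin.sum_univ_succ]; ring
    have hinner : ∀ x ∈ Ioo 0 T,
        ∫⁻ y in simplexD n (T - x),
            ENNReal.ofReal (∏ j, (Fin.cons x y : Fin (n + 1) → ℝ) j ^ m j) =
          ENNReal.ofReal (x ^ m 0 * (T - x) ^ K) *
            ENNReal.ofReal ((∏ j : Fin n, ((m j.succ)! : ℝ)) / K !) := by
      intro x hx
      have hx0 : 0 ≤ x ^ m 0 := pow_nonneg hx.1.le _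
      have hxK : 0 ≤ x ^ m 0 * (T - x) ^ K :=
        mul_nonneg hx0 (pow_nonneg (sub_nonneg.2 hx.2.le) _)
      simp only [Fin.prod_univ_succ, Fin.cons_zero, Fin.cons_succ, ENNReal.ofReal_mul hx0]
      rw [lintegral_const_mul _ (by fun_prop), ih _ (sub_pos.2 hx.2), ← ENNReal.ofReal_mul hx0,
        ← ENNReal.ofReal_mul hx0, ← ENNReal.ofReal_mul hxK]
      congr 1
      ring
    rw [lintegral_simplexD_succ _ _ (by fun_prop), setLIntegral_congr_fun measurableSet_Ioo hinner,
      lintegral_mul_const _ (by fun_prop), lintegral_Ioo_pow_mul_sub_pow _ _ hT,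
      ← ENNReal.ofReal_mul (by positivity), hK, Fin.prod_univ_succ]
    congr 1
    field_simp

theorem integral_simplexD_prod_pow (n : ℕ) (m : Fin n → ℕ) {T : ℝ} (hT : 0 < T) :
    ∫ u in simplexD n T, ∏ j, u j ^ m j =
      T ^ (n + ∑ j, m j) * (∏ j, ((m j)! : ℝ)) / (n + ∑ j, m j)! := by
  rw [integral_eq_lintegral_of_nonneg_ae _ (Continuous.aestronglyMeasurable (by fun_prop)),
    lintegral_simplexD_prod_pow n m hT, ENNReal.toReal_ofReal (by positivity)]
  filter_upwards [ae_restrict_mem (measurableSet_simplexD n T)] with u hu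
  exact Finset.prod_nonneg fun j _ => pow_nonneg (hu.1 j).le _

theorem integral_simplexD_prod_mul_pow_div_factorial (n : ℕ) (b : Fin n → ℝ) (m : Fin n → ℕ)
    {T : ℝ} (hT : 0 < T) :
    ∫ u in simplexD n T, ∏ j, (b j * u j) ^ m j / (m j)! =
      T ^ n * ((∏ j, (T * b j) ^ m j) / (n + ∑ j, m j)!) := by
  simp_rw [mul_pow, div_eq_mul_inv, Finset.prod_mul_distrib]
  rw [integral_mul_const, integral_const_mul, integral_simplexD_prod_pow n m hT,
    Finset.prod_pow_eq_pow_sum, pow_add, Finset.prod_inv_distrib]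
  field_simp

theorem simplexD_subset_Icc (n : ℕ) (T : ℝ) : simplexD n T ⊆ Icc 0 fun _ => T := by
  intro u ⟨hpos, hsum⟩
  refine ⟨fun j => (hpos j).le, fun j => ?_⟩
  calc u j ≤ ∑ i, u i := Finset.single_le_sum (fun i _ => (hpos i).le) (Finset.mem_univ j)
    _ ≤ T := hsum.le

theorem Continuous.integrableOn_simplexD {E : Type*} [NormedAddCommGroup E] {n : ℕ} {T : ℝ}
    {f : (Fin n → ℝ) → E} (hf : Continuous f) : IntegrableOn f (simplexD n T) :=
  hf.integrableOn_Icc.mono_set (simplexD_subset_Icc n T)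

section PiProd

variable {R κ : Type*} [NormedCommRing R]

theorem summable_norm_pi_prod {n : ℕ} (f : Fin n → κ → R)
    (hf : ∀ j, Summable fun k => ‖f j k‖) :
    Summable fun m : Fin n → κ => ‖∏ j, f j (m j)‖ := by
  induction n with
  | zero => exact Summable.of_finite
  | succ n ih =>
    rw [← (Fin.consEquiv fun _ => κ).summable_iff]
    refine Summable.of_nonneg_of_le (fun _ => norm_nonneg _) (fun p => ?_)
      ((hf 0).mul_norm (ih _ fun j => hf j.succ))
    simp [Fin.prod_univ_succ]

theorem tsum_pi_prod [CompleteSpace R] {n : ℕ} (f : Fin n → κ → R)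
    (hf : ∀ j, Summable fun k => ‖f j k‖) :
    ∑' m : Fin n → κ, ∏ j, f j (m j) = ∏ j, ∑' k, f j k := by
  induction n with
  | zero => simp
  | succ n ih =>
    rw [← (Fin.consEquiv fun _ => κ).tsum_eq, Fin.prod_univ_succ, ← ih _ fun j => hf j.succ,
      tsum_mul_tsum_of_summable_norm (hf 0) (summable_norm_pi_prod _ fun j => hf j.succ)]
    simp [Fin.prod_univ_succ]

end PiProd

theorem summable_norm_pow_div_factorial (x : ℝ) : Summable fun k => ‖x ^ k / (k ! : ℝ)‖ := by
  simpa [abs_div] using Real.summable_pow_div_factorial |x|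

theorem exp_sum_eq_tsum_pi {n : ℕ} (x : Fin n → ℝ) :
    Real.exp (∑ j, x j) = ∑' m : Fin n → ℕ, ∏ j, x j ^ m j / (m j)! := by
  rw [tsum_pi_prod (fun j k => x j ^ k / (k ! : ℝ)) fun j => summable_norm_pow_div_factorial _,
    Real.exp_sum]
  simp only [Real.exp_eq_exp_ℝ, NormedSpace.exp_eq_tsum_div]

theorem prod_factorial_le_factorial_add_sum {ι : Type*} (s : Finset ι) (m : ι → ℕ) (k : ℕ) :
    ∏ j ∈ s, (m j)! ≤ (k + ∑ j ∈ s, m j)! :=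
  (Nat.le_of_dvd (Nat.factorial_pos _) (Nat.prod_factorial_dvd_factorial_sum s m)).trans
    (Nat.factorial_le (Nat.le_add_left _ _))

theorem summable_prod_pow_div_factorial_add_sum {n : ℕ} (c : Fin n → ℝ) :
    Summable fun m : Fin n → ℕ => (∏ j, c j ^ m j) / (n + ∑ j, m j)! := by
  refine Summable.of_norm_bounded
    (summable_norm_pi_prod (fun j k => c j ^ k / (k ! : ℝ))
      fun j => summable_norm_pow_div_factorial _)
    fun m => ?_
  rw [Finset.prod_div_distrib, norm_div, norm_div, Real.norm_natCast, ← Nat.cast_prod,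
    Real.norm_natCast]
  exact div_le_div_of_nonneg_left (norm_nonneg _) (by positivity)
    (by exact_mod_cast prod_factorial_le_factorial_add_sum _ m n)

theorem stmt_4_general (n : ℕ) (T : ℝ) (hT : 0 < T)
    (a : Fin n → ℝ) :
    Summable (fun m : Fin n → ℕ =>
      (∏ j, (-(T * a j)) ^ m j) / Real.Gamma ((n : ℝ) + (∑ j, (m j : ℝ)) + 1)) ∧
    (∫ u in simplexD n T, Real.exp (-∑ j, a j * u j)) =
      T ^ n * ∑' m : Fin n → ℕ,
        (∏ j, (-(T * a j)) ^ m j) / Real.Gamma ((n : ℝ) + (∑ j, (m j : ℝ)) + 1) := by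
  have hΓ : ∀ m : Fin n → ℕ, Real.Gamma ((n : ℝ) + ∑ j, (m j : ℝ) + 1) = (n + ∑ j, m j)! := by
    intro m
    rw [← Real.Gamma_nat_eq_factorial]
    push_cast
    rfl
  simp_rw [hΓ, ← mul_neg]
  let F (m : Fin n → ℕ) (u : Fin n → ℝ) : ℝ := ∏ j, (-a j * u j) ^ m j / (m j)!
  have hF_norm (m : Fin n → ℕ) : ∫ u in simplexD n T, ‖F m u‖ =
      T ^ n * ((∏ j, (T * |a j|) ^ m j) / (n + ∑ j, m j)!) := by
    rw [← integral_simplexD_prod_mul_pow_div_factorial n (fun j => |a j|) m hT]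
    refine setIntegral_congr_fun (measurableSet_simplexD n T) fun u hu => ?_
    simp [F, abs_of_pos (hu.1 _)]
  have hF_sum := hasSum_integral_of_summable_integral_norm
    (fun m => Continuous.integrableOn_simplexD (T := T) (f := F m) (by fun_prop))
    (((summable_prod_pow_div_factorial_add_sum _).mul_left (T ^ n)).congr
      fun m => (hF_norm m).symm)
  refine ⟨summable_prod_pow_div_factorial_add_sum _, ?_⟩
  calc ∫ u in simplexD n T, Real.exp (-∑ j, a j * u j)
      = ∫ u in simplexD n T, ∑' m, F m u := by
        simp_rw [F, ← exp_sum_eq_tsum_pi, neg_mul, Finset.sum_neg_distrib]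
    _ = ∑' m : Fin n → ℕ, T ^ n * ((∏ j, (T * -a j) ^ m j) / (n + ∑ j, m j)!) := by
        rw [← hF_sum.tsum_eq]
        exact tsum_congr fun m => integral_simplexD_prod_mul_pow_div_factorial n (-a) m hT
    _ = _ := tsum_mul_left

theorem stmt_4 (n : ℕ) (hn : 1 ≤ n) (T : ℝ) (hT : 0 < T)
    (a : Fin n → ℝ) (ha : ∀ j, 0 ≤ a j) :
    Summable (fun m : Fin n → ℕ =>
      (∏ j, (-(T * a j)) ^ m j) / Real.Gamma ((n : ℝ) + (∑ j, (m j : ℝ)) + 1)) ∧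
    (∫ u in simplexD n T, Real.exp (-∑ j, a j * u j)) =
      T ^ n * ∑' m : Fin n → ℕ,
        (∏ j, (-(T * a j)) ^ m j) / Real.Gamma ((n : ℝ) + (∑ j, (m j : ℝ)) + 1) :=
  stmt_4_general n T hT a
end

section
/- Let z ∈ ℂ be nonzero with arg z ∈ [-3π/4, 3π/4] (principal argument) and let A ≥ 0 be a real number. Then 1/|z + A| ≤ 4/(|z| + A); equivalently, |z + A| ≥ (|z| + A)/4. -/
/-!
On the sector `|arg z| ≤ 3π/4` we have `re z ≥ cos(3π/4) ‖z‖ = -(√2/2) ‖z‖ ≥ -(3/4) ‖z‖`, so with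
`r = ‖z‖`, `‖z + A‖² = r² + 2A re z + A² ≥ r² - (3/2) r A + A²`, and
`16 (r² - (3/2) r A + A²) - (r + A)² = 15 r² - 26 r A + 15 A² ≥ 0`.
-/

open Real

theorem Real.cos_three_pi_div_four : cos (3 * π / 4) = -(√2 / 2) := by
  rw [show 3 * π / 4 = π - π / 4 by ring, cos_pi_sub, cos_pi_div_four]

namespace Complex

theorem norm_mul_cos_le_re {z : ℂ} {θ : ℝ} (hθ : θ ≤ π) (harg : |z.arg| ≤ θ) :
    ‖z‖ * Real.cos θ ≤ z.re := by
  rw [← norm_mul_cos_arg z, ← Real.cos_abs z.arg]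
  exact mul_le_mul_of_nonneg_left (cos_le_cos_of_nonneg_of_le_pi (abs_nonneg _) hθ harg)
    (norm_nonneg z)

theorem neg_three_div_four_mul_norm_le_re {z : ℂ} (harg : |z.arg| ≤ 3 * π / 4) :
    -(3 / 4) * ‖z‖ ≤ z.re := by
  have hcos := norm_mul_cos_le_re (by linarith [pi_pos]) harg
  rw [cos_three_pi_div_four] at hcos
  nlinarith [sqrt_two_lt_three_halves, norm_nonneg z]

theorem sq_norm_add_ofReal (z : ℂ) (A : ℝ) : ‖z + A‖ ^ 2 = ‖z‖ ^ 2 + 2 * A * z.re + A ^ 2 := by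
  simp only [← normSq_eq_norm_sq, normSq_apply, add_re, add_im, ofReal_re, ofReal_im, add_zero]
  ring

theorem norm_add_div_four_le_norm_add_ofReal {z : ℂ} (hre : -(3 / 4) * ‖z‖ ≤ z.re) {A : ℝ}
    (hA : 0 ≤ A) : (‖z‖ + A) / 4 ≤ ‖z + A‖ := by
  refine abs_le_of_sq_le_sq' ?_ (norm_nonneg _) |>.2
  rw [sq_norm_add_ofReal]
  nlinarith [sq_nonneg (‖z‖ - A), mul_nonneg (norm_nonneg z) hA]

end Complex

theorem stmt_6 (z : ℂ) (hz : z ≠ 0)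
    (harg : z.arg ∈ Set.Icc (-(3 * Real.pi / 4)) (3 * Real.pi / 4))
    (A : ℝ) (hA : 0 ≤ A) :
    1 / ‖z + (A : ℂ)‖ ≤ 4 / (‖z‖ + A) ∧
      (‖z‖ + A) / 4 ≤ ‖z + (A : ℂ)‖ := by
  have hre := Complex.neg_three_div_four_mul_norm_le_re (abs_le.mpr harg)
  have hlower := Complex.norm_add_div_four_le_norm_add_ofReal hre hA
  have hpos : 0 < (‖z‖ + A) / 4 := by positivity
  refine ⟨?_, hlower⟩
  rw [← one_div_div (‖z‖ + A) 4]
  exact one_div_le_one_div_of_le hpos hlower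
end

section
/- Let z ∈ ℂ be nonzero with arg z ∈ [-3π/4, 3π/4] (principal argument), and let A : ℝ → ℝ be a measurable function with A(v) ≥ 0 for all v, such that the function v ↦ 1/(|z| + A(v)) is integrable on ℝ. Then |∫_ℝ 1/(z + A(v)) dv| ≥ (1/4) ∫_ℝ 1/(|z| + A(v)) dv. -/
/-! Write `z = r e^{iθ}` and rotate by `e^{-iθ/2}`: for `a ≥ 0` this turns `z + a` into
`r e^{iθ/2} + a e^{-iθ/2}`, whose real part is `(r + a) cos (θ/2)` and whose modulus is at most
`r + a`. Hence `Re (e^{iθ/2} / (z + a)) ≥ cos (θ/2) / (r + a)` with one and the same rotation for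
every `a`, and integrating gives the bound, because `cos (θ/2) ≥ cos (3π/8) > 1/4`. -/

open MeasureTheory Complex

lemma Real.quarter_le_cos_of_abs_le {x : ℝ} (hx : |x| ≤ 3 * Real.pi / 8) :
    1 / 4 ≤ Real.cos x := by
  have hsq : x ^ 2 ≤ (3 * Real.pi / 8) ^ 2 := sq_le_sq' (abs_le.1 hx).1 (abs_le.1 hx).2
  nlinarith [Real.one_sub_sq_div_two_le_cos (x := x), Real.pi_lt_d2, Real.pi_pos]

namespace Complex

lemma re_div_sq_le_inv_re {ζ : ℂ} {R : ℝ} (hre : 0 ≤ ζ.re) (hR : ‖ζ‖ ≤ R) :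
    ζ.re / R ^ 2 ≤ ζ⁻¹.re := by
  rcases eq_or_ne ζ 0 with rfl | hζ
  · simp
  rw [inv_re, normSq_eq_norm_sq]
  exact div_le_div_of_nonneg_left hre (by positivity) (pow_le_pow_left₀ (norm_nonneg _) hR 2)

lemma re_add_ofReal_mul_exp_neg_half_arg (z : ℂ) (a : ℝ) :
    ((z + a) * exp (↑(-(z.arg / 2)) * I)).re = (‖z‖ + a) * Real.cos (z.arg / 2) := by
  have hcos : Real.cos z.arg * Real.cos (z.arg / 2) + Real.sin z.arg * Real.sin (z.arg / 2)
      = Real.cos (z.arg / 2) := by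
    rw [← Real.cos_sub]; ring_nf
  rw [mul_re, exp_ofReal_mul_I_re, exp_ofReal_mul_I_im, add_re, add_im, ofReal_re, ofReal_im,
    ← norm_mul_cos_arg z, ← norm_mul_sin_arg z, Real.cos_neg, Real.sin_neg]
  linear_combination ‖z‖ * hcos

variable {z : ℂ} {a : ℝ}

lemma mul_cos_half_arg_le_norm_add_ofReal :
    (‖z‖ + a) * Real.cos (z.arg / 2) ≤ ‖z + a‖ := by
  rw [← re_add_ofReal_mul_exp_neg_half_arg, ← mul_one ‖(z : ℂ) + a‖,
    ← norm_exp_ofReal_mul_I (-(z.arg / 2)), ← norm_mul]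
  exact re_le_norm _

lemma cos_half_arg_div_le_re_inv_mul_exp_half_arg (ha : 0 ≤ a) :
    Real.cos (z.arg / 2) / (‖z‖ + a) ≤ ((z + a)⁻¹ * exp (↑(z.arg / 2) * I)).re := by
  have hcos : 0 ≤ Real.cos (z.arg / 2) :=
    Real.cos_nonneg_of_mem_Icc ⟨by linarith [neg_pi_lt_arg z], by linarith [arg_le_pi z]⟩
  have hnorm : ‖(z + a) * exp (↑(-(z.arg / 2)) * I)‖ ≤ ‖z‖ + a := by
    rw [norm_mul, norm_exp_ofReal_mul_I, mul_one]
    exact (norm_add_le _ _).trans (by rw [norm_real, Real.norm_of_nonneg ha])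
  have key := re_div_sq_le_inv_re
    (by rw [re_add_ofReal_mul_exp_neg_half_arg]; positivity) hnorm
  rw [re_add_ofReal_mul_exp_neg_half_arg, mul_inv, ← exp_neg, ofReal_neg, neg_mul, neg_neg] at key
  calc Real.cos (z.arg / 2) / (‖z‖ + a) = (‖z‖ + a) * Real.cos (z.arg / 2) / (‖z‖ + a) ^ 2 := by
        rcases eq_or_ne (‖z‖ + a) 0 with h | h
        · simp [h]
        · field_simp
    _ ≤ _ := key

end Complex

lemma MeasureTheory.integral_le_norm_integral_of_le_re_mul {α : Type*} [MeasurableSpace α]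
    {μ : Measure α} {f : α → ℂ} {g : α → ℝ} {c : ℂ} (hc : ‖c‖ ≤ 1) (hf : Integrable f μ)
    (hg : Integrable g μ) (h : ∀ᵐ x ∂μ, g x ≤ (f x * c).re) :
    ∫ x, g x ∂μ ≤ ‖∫ x, f x ∂μ‖ :=
  calc ∫ x, g x ∂μ ≤ ∫ x, (f x * c).re ∂μ := integral_mono_ae hg (hf.mul_const c).re h
    _ = (∫ x, f x * c ∂μ).re := integral_re (hf.mul_const c)
    _ ≤ ‖∫ x, f x * c ∂μ‖ := re_le_norm _
    _ = ‖∫ x, f x ∂μ‖ * ‖c‖ := by rw [integral_mul_const, norm_mul]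
    _ ≤ ‖∫ x, f x ∂μ‖ := mul_le_of_le_one_right (norm_nonneg _) hc

theorem stmt_7 (z : ℂ) (hz : z ≠ 0)
    (harg : z.arg ∈ Set.Icc (-(3 * Real.pi / 4)) (3 * Real.pi / 4))
    (A : ℝ → ℝ) (hAm : Measurable A) (hA : ∀ v, 0 ≤ A v)
    (hint : Integrable (fun v : ℝ => 1 / (‖z‖ + A v))) :
    (1 / 4) * ∫ v : ℝ, 1 / (‖z‖ + A v) ≤
      ‖∫ v : ℝ, 1 / (z + (A v : ℂ))‖ := by
  have hcos : 1 / 4 ≤ Real.cos (z.arg / 2) :=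
    Real.quarter_le_cos_of_abs_le (abs_le.2 ⟨by linarith [harg.1], by linarith [harg.2]⟩)
  have hpos : ∀ v, 0 < ‖z‖ + A v := fun v => add_pos_of_pos_of_nonneg (norm_pos_iff.2 hz) (hA v)
  have hbound : ∀ v, ‖1 / (z + (A v : ℂ))‖ ≤ 4 * (1 / (‖z‖ + A v)) := fun v => by
    have hlow : (‖z‖ + A v) / 4 ≤ ‖z + (A v : ℂ)‖ :=
      le_trans (by nlinarith [hpos v]) mul_cos_half_arg_le_norm_add_ofReal
    rw [norm_div, norm_one]
    calc 1 / ‖z + (A v : ℂ)‖ ≤ 1 / ((‖z‖ + A v) / 4) :=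
          one_div_le_one_div_of_le (by linarith [hpos v]) hlow
      _ = 4 * (1 / (‖z‖ + A v)) := by field_simp
  have hf : Integrable (fun v : ℝ => 1 / (z + (A v : ℂ))) :=
    (hint.const_mul 4).mono'
      (measurable_const.div ((measurable_ofReal.comp hAm).const_add z)).aestronglyMeasurable
      (.of_forall hbound)
  rw [← integral_const_mul]
  refine integral_le_norm_integral_of_le_re_mul (norm_exp_ofReal_mul_I (z.arg / 2)).le hf
    (hint.const_mul _) (.of_forall fun v => ?_)
  calc 1 / 4 * (1 / (‖z‖ + A v)) ≤ Real.cos (z.arg / 2) / (‖z‖ + A v) := by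
        rw [div_eq_mul_one_div (Real.cos _)]
        exact mul_le_mul_of_nonneg_right hcos (one_div_pos.2 (hpos v)).le
    _ ≤ _ := by simpa only [one_div] using cos_half_arg_div_le_re_inv_mul_exp_half_arg (hA v)
end

section
/- Let T > 0 and α₁, α₂ ∈ (0,2] with max{α₁,α₂} > 1. For every nonzero z ∈ ℂ with arg z ∈ [-3π/4, 3π/4], one has |Φ(z)| ≤ (∫_ℝ 4/(1 + T|v|^{max{α₁,α₂}}) dv) · |z|^{1/max{α₁,α₂} − 1}. -/
open MeasureTheory

/-- `Φ(z) = ∫_ℝ 1/(z + T|v|^{α₁} + T|v|^{α₂}) dv`. -/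
noncomputable def Phi (T α₁ α₂ : ℝ) (z : ℂ) : ℂ :=
  ∫ v : ℝ, (z + ((T * |v| ^ α₁ + T * |v| ^ α₂ : ℝ) : ℂ))⁻¹

/-!
On the sector `|arg z| ≤ 3π/4` one has `Re z ≥ -(√2/2)|z|`, hence `|z + s| ≥ (|z| + s)/3` for
every `s ≥ 0`. With `α = max α₁ α₂` the denominator of `Φ` dominates `z + T|v|^α` in this sense,
so `|Φ(z)| ≤ 3 ∫ (|z| + T|v|^α)⁻¹ dv`, and the substitution `v = |z|^{1/α} u` turns the right side
into `3 |z|^{1/α - 1} ∫ (1 + T|u|^α)⁻¹ du`, which is finite because `α > 1`.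
-/

open Real

lemma neg_sqrt_two_div_two_mul_norm_le_re {z : ℂ} (h : |z.arg| ≤ 3 * π / 4) :
    -(√2 / 2) * ‖z‖ ≤ z.re := by
  have hcos : cos (3 * π / 4) = -(√2 / 2) := by
    rw [show 3 * π / 4 = π - π / 4 by ring, cos_pi_sub, cos_pi_div_four]
  have hle : cos (3 * π / 4) ≤ cos z.arg := by
    rw [← cos_abs z.arg]
    exact cos_le_cos_of_nonneg_of_le_pi (abs_nonneg _) (by linarith [pi_pos]) h
  rw [← Complex.norm_mul_cos_arg z, mul_comm, ← hcos]
  exact mul_le_mul_of_nonneg_left hle (norm_nonneg z)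

lemma norm_add_le_three_mul_norm_add_ofReal {z : ℂ} (hre : -(√2 / 2) * ‖z‖ ≤ z.re)
    {s : ℝ} (hs : 0 ≤ s) : ‖z‖ + s ≤ 3 * ‖z + s‖ := by
  have hsq : ‖z + s‖ ^ 2 = ‖z‖ ^ 2 + 2 * z.re * s + s ^ 2 := by
    simp only [Complex.sq_norm, Complex.normSq_apply, Complex.add_re, Complex.add_im,
      Complex.ofReal_re, Complex.ofReal_im]
    ring
  have hsqrt : √2 ≤ 3 / 2 := by
    rw [sqrt_le_left (by norm_num)]
    norm_num
  have h9 : (‖z‖ + s) ^ 2 ≤ (3 * ‖z + s‖) ^ 2 := by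
    rw [mul_pow, hsq]
    -- with `√2 ≤ 3/2` the difference is at least `8(|z| - s)² ≥ 0`
    nlinarith [sq_nonneg (‖z‖ - s), mul_le_mul_of_nonneg_right hre hs,
      mul_nonneg (norm_nonneg z) hs]
  exact pow_le_pow_iff_left₀ (by positivity) (by positivity) two_ne_zero |>.1 h9

lemma norm_inv_add_ofReal_le {z : ℂ} (hz : z ≠ 0) (harg : |z.arg| ≤ 3 * π / 4)
    {s s' : ℝ} (hs' : 0 ≤ s') (hs's : s' ≤ s) : ‖(z + s)⁻¹‖ ≤ 3 * (‖z‖ + s')⁻¹ := by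
  have hle : (‖z‖ + s') / 3 ≤ ‖z + s‖ := by
    have := norm_add_le_three_mul_norm_add_ofReal
      (neg_sqrt_two_div_two_mul_norm_le_re harg) (hs'.trans hs's)
    linarith
  rw [norm_inv, ← div_eq_mul_inv, ← inv_div]
  exact inv_anti₀ (by positivity) hle

lemma one_add_rpow_le_two_rpow_mul {x α : ℝ} (hx : 0 ≤ x) (hα : 0 ≤ α) :
    (1 + x) ^ α ≤ 2 ^ α * (1 + x ^ α) := by
  have hxα : 0 ≤ x ^ α := rpow_nonneg hx α
  rcases le_total x 1 with h | h
  · calc (1 + x) ^ α ≤ 2 ^ α := rpow_le_rpow (by positivity) (by linarith) hα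
      _ ≤ 2 ^ α * (1 + x ^ α) := le_mul_of_one_le_right (by positivity) (by linarith)
  · calc (1 + x) ^ α ≤ (2 * x) ^ α := rpow_le_rpow (by positivity) (by linarith) hα
      _ = 2 ^ α * x ^ α := mul_rpow zero_le_two hx
      _ ≤ 2 ^ α * (1 + x ^ α) := by gcongr; linarith

lemma integrable_inv_add_mul_abs_rpow {a T α : ℝ} (ha : 0 < a) (hT : 0 < T) (hα : 1 < α) :
    Integrable fun v : ℝ ↦ (a + T * |v| ^ α)⁻¹ := by
  have hm : 0 < min a T := lt_min ha hT
  set C := 2 ^ α / min a T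
  refine ((integrable_one_add_norm (by simpa using hα)).const_mul C).mono'
    (Measurable.aestronglyMeasurable (by fun_prop)) (.of_forall fun v ↦ ?_)
  have hvα : 0 ≤ |v| ^ α := by positivity
  have hbound : (1 + |v|) ^ α ≤ C * (a + T * |v| ^ α) := by
    calc (1 + |v|) ^ α ≤ 2 ^ α * (1 + |v| ^ α) :=
          one_add_rpow_le_two_rpow_mul (abs_nonneg v) (by linarith)
      _ = C * (min a T * (1 + |v| ^ α)) := by rw [← mul_assoc, div_mul_cancel₀ _ hm.ne']
      _ ≤ C * (a + T * |v| ^ α) := by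
          gcongr
          nlinarith [min_le_left a T, min_le_right a T]
  rw [Real.norm_of_nonneg (by positivity), Real.norm_eq_abs, rpow_neg (by positivity),
    ← div_eq_mul_inv, le_div_iff₀ (by positivity), inv_mul_le_iff₀ (by positivity), mul_comm]
  exact hbound

lemma integral_inv_add_mul_abs_rpow {r T α : ℝ} (hr : 0 < r) (hα : 0 < α) :
    ∫ v : ℝ, (r + T * |v| ^ α)⁻¹ = r ^ (1 / α - 1) * ∫ v : ℝ, (1 + T * |v| ^ α)⁻¹ := by
  set c := r ^ (1 / α)
  have hc : 0 < c := rpow_pos_of_pos hr _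
  have hcα : c ^ α = r := by
    rw [← rpow_mul hr.le, one_div_mul_cancel hα.ne', rpow_one]
  have hscale : ∀ u : ℝ, (r + T * |c * u| ^ α)⁻¹ = r⁻¹ * (1 + T * |u| ^ α)⁻¹ := fun u ↦ by
    rw [abs_mul, abs_of_pos hc, mul_rpow hc.le (abs_nonneg u), hcα, ← mul_inv]
    ring_nf
  have h := Measure.integral_comp_mul_left (fun v : ℝ ↦ (r + T * |v| ^ α)⁻¹) c
  simp only [hscale, integral_const_mul, smul_eq_mul, abs_inv, abs_of_pos hc] at h
  rw [rpow_sub hr, rpow_one, div_eq_mul_inv, mul_assoc, h, ← mul_assoc, mul_inv_cancel₀ hc.ne',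
    one_mul]

lemma mul_abs_rpow_max_le_add {T : ℝ} (hT : 0 ≤ T) (v α₁ α₂ : ℝ) :
    T * |v| ^ max α₁ α₂ ≤ T * |v| ^ α₁ + T * |v| ^ α₂ := by
  have h₁ : 0 ≤ T * |v| ^ α₁ := by positivity
  have h₂ : 0 ≤ T * |v| ^ α₂ := by positivity
  rcases max_choice α₁ α₂ with h | h <;> rw [h] <;> linarith

theorem stmt_8_general (T α₁ α₂ : ℝ) (hT : 0 < T) (hmax : 1 < max α₁ α₂)
    (z : ℂ) (hz : z ≠ 0)
    (harg : z.arg ∈ Set.Icc (-(3 * Real.pi / 4)) (3 * Real.pi / 4)) :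
    ‖Phi T α₁ α₂ z‖ ≤
      (∫ v : ℝ, 4 / (1 + T * |v| ^ max α₁ α₂)) *
        ‖z‖ ^ (1 / max α₁ α₂ - 1) := by
  set α := max α₁ α₂
  have hr : 0 < ‖z‖ := norm_pos_iff.2 hz
  have hI : 0 ≤ ∫ v : ℝ, (1 + T * |v| ^ α)⁻¹ := integral_nonneg fun v ↦ by positivity
  calc ‖Phi T α₁ α₂ z‖
      ≤ ∫ v : ℝ, ‖(z + ((T * |v| ^ α₁ + T * |v| ^ α₂ : ℝ) : ℂ))⁻¹‖ :=
        norm_integral_le_integral_norm _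
    _ ≤ ∫ v : ℝ, 3 * (‖z‖ + T * |v| ^ α)⁻¹ :=
        integral_mono_of_nonneg (.of_forall fun _ ↦ norm_nonneg _)
          ((integrable_inv_add_mul_abs_rpow hr hT hmax).const_mul 3)
          (.of_forall fun v ↦ norm_inv_add_ofReal_le hz (abs_le.2 harg) (by positivity)
            (mul_abs_rpow_max_le_add hT.le v α₁ α₂))
    _ = 3 * (∫ v : ℝ, (1 + T * |v| ^ α)⁻¹) * ‖z‖ ^ (1 / α - 1) := by
        rw [integral_const_mul, integral_inv_add_mul_abs_rpow hr (by linarith)]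
        ring
    _ ≤ (∫ v : ℝ, 4 / (1 + T * |v| ^ α)) * ‖z‖ ^ (1 / α - 1) := by
        simp only [div_eq_mul_inv (4 : ℝ), integral_const_mul]
        gcongr
        norm_num

theorem stmt_8 (T α₁ α₂ : ℝ) (hT : 0 < T)
    (h1 : α₁ ∈ Set.Ioc (0 : ℝ) 2) (h2 : α₂ ∈ Set.Ioc (0 : ℝ) 2) (hmax : 1 < max α₁ α₂)
    (z : ℂ) (hz : z ≠ 0)
    (harg : z.arg ∈ Set.Icc (-(3 * Real.pi / 4)) (3 * Real.pi / 4)) :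
    ‖Phi T α₁ α₂ z‖ ≤
      (∫ v : ℝ, 4 / (1 + T * |v| ^ max α₁ α₂)) *
        ‖z‖ ^ (1 / max α₁ α₂ - 1) :=
  stmt_8_general T α₁ α₂ hT hmax z hz harg
end

section
/- Let T > 0 and α₁, α₂ ∈ (0,2] with max{α₁,α₂} > 1. For every nonzero z ∈ ℂ with arg z ∈ [-3π/4, 3π/4], one has |Φ(z)| ≥ (1/4) (∫_ℝ 1/(1 + T|v|^{α₁} + T|v|^{α₂}) dv) · min{|z|^{1/max{α₁,α₂} − 1}, 1}. -/
/-!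
Put `s = ‖z‖ + z`, which points along the bisector of `0` and `arg z`. For real `g` one has
`Re (conj s * (z + g)) = (‖z‖ + Re z) (‖z‖ + g)`, so for `g ≥ 0` the real part of `s / (z + g)`
is at least `(‖z‖ + Re z) / (‖z‖ + g)`. Integrating with `g = T|v|^α₁ + T|v|^α₂` gives
`(‖z‖ + Re z) ∫ 1/(‖z‖ + g) ≤ ‖s‖ ‖Φ(z)‖`, and `|arg z| ≤ 3π/4` makes `‖s‖ ≤ 4 (‖z‖ + Re z)`.
Finally, with `α = max α₁ α₂`, the substitution `v ↦ r^{1/α} v` shows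
`∫ 1/(r + g) ≥ r^{1/α - 1} ∫ 1/(1 + g)` for `r ≥ 1`, while for `r ≤ 1` monotonicity suffices.
-/

open MeasureTheory

open Complex ComplexConjugate

lemma re_conj_norm_add_self_mul_add_ofReal (z : ℂ) (g : ℝ) :
    (conj ((‖z‖ : ℂ) + z) * (z + g)).re = (‖z‖ + z.re) * (‖z‖ + g) := by
  have h : z.re ^ 2 + z.im ^ 2 = ‖z‖ ^ 2 := by rw [Complex.sq_norm, normSq_apply]; ring
  simp only [mul_re, conj_re, conj_im, add_re, add_im, ofReal_re, ofReal_im]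
  linear_combination h

lemma mul_norm_add_le_norm_mul_norm (z : ℂ) (g : ℝ) :
    (‖z‖ + z.re) * (‖z‖ + g) ≤ ‖(‖z‖ : ℂ) + z‖ * ‖z + g‖ := by
  rw [← re_conj_norm_add_self_mul_add_ofReal, ← norm_conj ((‖z‖ : ℂ) + z), ← norm_mul]
  exact re_le_norm _

lemma div_norm_add_le_re_div (z : ℂ) {g : ℝ} (hg : 0 ≤ g) :
    (‖z‖ + z.re) / (‖z‖ + g) ≤ (((‖z‖ : ℂ) + z) / (z + g)).re := by
  have hre : (((‖z‖ : ℂ) + z) / (z + g)).re = (‖z‖ + z.re) * (‖z‖ + g) / normSq (z + g) := by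
    rw [div_re, ← add_div, ← re_conj_norm_add_self_mul_add_ofReal]
    simp only [mul_re, conj_re, conj_im]
    ring
  have hrx : 0 ≤ ‖z‖ + z.re := by linarith [neg_abs_le z.re, abs_re_le_norm z]
  have hsq : (‖z‖ + z.re) / (‖z‖ + g) = (‖z‖ + z.re) * (‖z‖ + g) / (‖z‖ + g) ^ 2 := by
    rcases eq_or_ne (‖z‖ + g) 0 with h | h
    · simp [h]
    · field_simp
  rw [hre, hsq]
  rcases eq_or_ne (z + g) 0 with hw | hw
  · have h0 := re_conj_norm_add_self_mul_add_ofReal z g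
    rw [hw, mul_zero, zero_re] at h0
    rw [← h0, zero_div, zero_div]
  · refine div_le_div_of_nonneg_left (by positivity) (normSq_pos.2 hw) ?_
    rw [← Complex.sq_norm]
    gcongr
    calc ‖z + g‖ ≤ ‖z‖ + ‖(g : ℂ)‖ := norm_add_le _ _
      _ = ‖z‖ + g := by rw [norm_real, Real.norm_of_nonneg hg]

lemma norm_mul_cos_le_re {z : ℂ} {θ : ℝ} (hθ : |arg z| ≤ θ) (hθπ : θ ≤ Real.pi) :
    ‖z‖ * Real.cos θ ≤ z.re := by
  rw [← norm_mul_cos_arg, ← Real.cos_abs (arg z)]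
  exact mul_le_mul_of_nonneg_left
    (Real.cos_le_cos_of_nonneg_of_le_pi (abs_nonneg _) hθπ hθ) (norm_nonneg _)

lemma norm_le_eight_mul_norm_add_re {z : ℂ} (harg : |arg z| ≤ 3 * Real.pi / 4) :
    ‖z‖ ≤ 8 * (‖z‖ + z.re) := by
  have hcos : Real.cos (3 * Real.pi / 4) = -(√2 / 2) := by
    rw [show 3 * Real.pi / 4 = Real.pi - Real.pi / 4 by ring, Real.cos_pi_sub,
      Real.cos_pi_div_four]
  have hre := norm_mul_cos_le_re harg (by linarith [Real.pi_pos])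
  rw [hcos] at hre
  nlinarith [Real.sqrt_two_lt_three_halves, norm_nonneg z]

lemma norm_norm_add_self_le_four_mul {z : ℂ} (harg : |arg z| ≤ 3 * Real.pi / 4) :
    ‖(‖z‖ : ℂ) + z‖ ≤ 4 * (‖z‖ + z.re) := by
  have h8 := norm_le_eight_mul_norm_add_re harg
  have hsq : ‖(‖z‖ : ℂ) + z‖ ^ 2 = 2 * ‖z‖ * (‖z‖ + z.re) := by
    have h : z.re ^ 2 + z.im ^ 2 = ‖z‖ ^ 2 := by rw [Complex.sq_norm, normSq_apply]; ring
    rw [Complex.sq_norm, normSq_apply]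
    simp only [add_re, add_im, ofReal_re, ofReal_im]
    linear_combination h
  refine abs_le_of_sq_le_sq' ?_ (by linarith [norm_nonneg z]) |>.2
  nlinarith [norm_nonneg z]

section

variable {X : Type*} [MeasurableSpace X] {μ : Measure X} {G : X → ℝ} {z : ℂ}

lemma integrable_inv_add_ofReal (hG : AEMeasurable G μ) (hG0 : ∀ v, 0 ≤ G v)
    (hz : 0 < ‖z‖ + z.re) (hint : Integrable (fun v ↦ (‖z‖ + G v)⁻¹) μ) :
    Integrable (fun v ↦ (z + (G v : ℂ))⁻¹) μ := by
  have hs : 0 < ‖(‖z‖ : ℂ) + z‖ := by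
    have := re_le_norm ((‖z‖ : ℂ) + z)
    simp only [add_re, ofReal_re] at this
    linarith
  refine (hint.const_mul (‖(‖z‖ : ℂ) + z‖ / (‖z‖ + z.re))).mono'
    (aemeasurable_const.add (measurable_ofReal.comp_aemeasurable hG)).inv.aestronglyMeasurable
    (ae_of_all _ fun v ↦ ?_)
  have hrg : 0 < ‖z‖ + G v := by linarith [hG0 v, re_le_norm z]
  rw [norm_inv]
  calc ‖z + (G v : ℂ)‖⁻¹ ≤ ((‖z‖ + z.re) * (‖z‖ + G v) / ‖(‖z‖ : ℂ) + z‖)⁻¹ :=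
        inv_anti₀ (by positivity)
          (by rw [div_le_iff₀' hs]; exact mul_norm_add_le_norm_mul_norm z (G v))
    _ = ‖(‖z‖ : ℂ) + z‖ / (‖z‖ + z.re) * (‖z‖ + G v)⁻¹ := by field_simp

lemma mul_integral_le_norm_mul_norm_integral (hG : AEMeasurable G μ) (hG0 : ∀ v, 0 ≤ G v)
    (hint : Integrable (fun v ↦ (‖z‖ + G v)⁻¹) μ) :
    (‖z‖ + z.re) * ∫ v, (‖z‖ + G v)⁻¹ ∂μ ≤
      ‖(‖z‖ : ℂ) + z‖ * ‖∫ v, (z + (G v : ℂ))⁻¹ ∂μ‖ := by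
  rcases eq_or_lt_of_le (show 0 ≤ ‖z‖ + z.re by linarith [abs_re_le_norm z, neg_abs_le z.re])
    with hz | hz
  · rw [← hz, zero_mul]; positivity
  set s : ℂ := (‖z‖ : ℂ) + z
  have hsint := (integrable_inv_add_ofReal hG hG0 hz hint).const_mul s
  calc (‖z‖ + z.re) * ∫ v, (‖z‖ + G v)⁻¹ ∂μ = ∫ v, (‖z‖ + z.re) / (‖z‖ + G v) ∂μ := by
        rw [← integral_const_mul]; simp only [div_eq_mul_inv]
    _ ≤ ∫ v, (s * (z + (G v : ℂ))⁻¹).re ∂μ := by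
        refine integral_mono (by simpa only [div_eq_mul_inv] using hint.const_mul _) hsint.re
          fun v ↦ ?_
        simpa only [div_eq_mul_inv] using div_norm_add_le_re_div z (hG0 v)
    _ = (s * ∫ v, (z + (G v : ℂ))⁻¹ ∂μ).re := by
        rw [← integral_const_mul]; exact integral_re hsint
    _ ≤ ‖s‖ * ‖∫ v, (z + (G v : ℂ))⁻¹ ∂μ‖ := (re_le_norm _).trans (norm_mul _ _).le

end

lemma one_add_rpow_le {x p : ℝ} (hx : 0 ≤ x) (hp : 1 ≤ p) :
    (1 + x) ^ p ≤ 2 ^ (p - 1) * (1 + x ^ p) := by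
  have := NNReal.coe_le_coe.2 (NNReal.rpow_add_le_mul_rpow_add_rpow 1 x.toNNReal hp)
  push_cast [Real.coe_toNNReal _ hx, Real.one_rpow] at this
  exact this

lemma integrable_inv_add_mul_abs_rpow_s9 {b c p : ℝ} (hb : 0 < b) (hc : 0 < c) (hp : 1 < p) :
    Integrable (fun v : ℝ ↦ (b + c * |v| ^ p)⁻¹) := by
  set m := min b c
  have hm : 0 < m := lt_min hb hc
  refine ((integrable_one_add_norm (E := ℝ) (r := p) (by simpa using hp)).const_mul
    (2 ^ (p - 1) / m)).mono' (Measurable.aestronglyMeasurable (by fun_prop))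
    (ae_of_all _ fun v ↦ ?_)
  have hden : 0 < b + c * |v| ^ p := by positivity
  have hbound : (1 + |v|) ^ p ≤ 2 ^ (p - 1) / m * (b + c * |v| ^ p) := by
    have h1 := one_add_rpow_le (abs_nonneg v) hp.le
    have h2 : m * (1 + |v| ^ p) ≤ b + c * |v| ^ p := by
      have := min_le_left b c; have := min_le_right b c
      nlinarith [Real.rpow_nonneg (abs_nonneg v) p]
    calc (1 + |v|) ^ p ≤ 2 ^ (p - 1) * (1 + |v| ^ p) := h1
      _ ≤ 2 ^ (p - 1) * ((b + c * |v| ^ p) / m) := by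
          gcongr; rwa [le_div_iff₀ hm, mul_comm]
      _ = _ := by ring
  rw [norm_inv, Real.norm_of_nonneg hden.le, Real.norm_eq_abs, Real.rpow_neg (by positivity),
    ← div_eq_mul_inv, le_div_iff₀ (by positivity), inv_mul_le_iff₀ hden]
  linarith

lemma integrable_inv_add_rpow_add_rpow {b T α₁ α₂ : ℝ} (hb : 0 < b) (hT : 0 < T)
    (hmax : 1 < max α₁ α₂) :
    Integrable (fun v : ℝ ↦ (b + (T * |v| ^ α₁ + T * |v| ^ α₂))⁻¹) := by
  refine (integrable_inv_add_mul_abs_rpow_s9 hb hT hmax).mono'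
    (Measurable.aestronglyMeasurable (by fun_prop)) (ae_of_all _ fun v ↦ ?_)
  have h₁ := Real.rpow_nonneg (abs_nonneg v) α₁
  have h₂ := Real.rpow_nonneg (abs_nonneg v) α₂
  have hmax_le : |v| ^ max α₁ α₂ ≤ |v| ^ α₁ + |v| ^ α₂ := by
    rcases max_choice α₁ α₂ with h | h <;> rw [h] <;> linarith
  rw [norm_inv, Real.norm_of_nonneg (by positivity)]
  exact inv_anti₀ (by positivity) (by nlinarith)

lemma div_mul_integral_inv_one_add_le {G : ℝ → ℝ} {c r : ℝ} (hc : 0 < c) (hr : 0 < r)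
    (hG0 : ∀ v, 0 ≤ G v) (hGc : ∀ v, G (c * v) ≤ r * G v)
    (hint : Integrable (fun v ↦ (r + G v)⁻¹)) :
    c / r * ∫ v, (1 + G v)⁻¹ ≤ ∫ v, (r + G v)⁻¹ := by
  have hsub : ∫ v, (r + G v)⁻¹ = c * ∫ v, (r + G (c * v))⁻¹ := by
    rw [Measure.integral_comp_mul_left (fun v ↦ (r + G v)⁻¹) c, smul_eq_mul,
      abs_of_pos (inv_pos.2 hc), mul_inv_cancel_left₀ hc.ne']
  have hle : r⁻¹ * ∫ v, (1 + G v)⁻¹ ≤ ∫ v, (r + G (c * v))⁻¹ := by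
    rw [← integral_const_mul]
    refine integral_mono_of_nonneg (ae_of_all _ fun v ↦ ?_) (hint.comp_mul_left' hc.ne')
      (ae_of_all _ fun v ↦ ?_)
    · have := hG0 v; positivity
    · have := hG0 (c * v)
      simp only [← mul_inv]
      exact inv_anti₀ (by positivity) (by linarith [hGc v])
  rw [hsub, div_eq_mul_inv, mul_assoc]
  gcongr

lemma mul_min_rpow_le_integral_inv_add {T α₁ α₂ r : ℝ} (hT : 0 < T) (hmax : 1 < max α₁ α₂)
    (hr : 0 < r) :
    (∫ v : ℝ, (1 + (T * |v| ^ α₁ + T * |v| ^ α₂))⁻¹) * min (r ^ (1 / max α₁ α₂ - 1)) 1 ≤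
      ∫ v : ℝ, (r + (T * |v| ^ α₁ + T * |v| ^ α₂))⁻¹ := by
  set α := max α₁ α₂
  have hα : 0 < α := one_pos.trans hmax
  have hG0 : ∀ v : ℝ, 0 ≤ T * |v| ^ α₁ + T * |v| ^ α₂ := fun v ↦ by positivity
  have hint := integrable_inv_add_rpow_add_rpow hr hT hmax
  have hexp : 1 / α - 1 ≤ 0 := by rw [sub_nonpos, div_le_one hα]; exact hmax.le
  rcases le_or_gt r 1 with hr1 | hr1
  · rw [min_eq_right (Real.one_le_rpow_of_pos_of_le_one_of_nonpos hr hr1 hexp), mul_one]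
    refine integral_mono_of_nonneg (ae_of_all _ fun v ↦ ?_) hint (ae_of_all _ fun v ↦ ?_)
    · have := hG0 v; positivity
    · have := hG0 v; exact inv_anti₀ (by positivity) (by linarith)
  · rw [min_eq_left (Real.rpow_le_one_of_one_le_of_nonpos hr1.le hexp), mul_comm,
      Real.rpow_sub hr, Real.rpow_one]
    refine div_mul_integral_inv_one_add_le (Real.rpow_pos_of_pos hr _) hr hG0 (fun v ↦ ?_) hint
    have hpow : ∀ β ≤ α, T * |r ^ (1 / α) * v| ^ β ≤ r * (T * |v| ^ β) := fun β hβ ↦ by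
      rw [abs_mul, abs_of_pos (Real.rpow_pos_of_pos hr _), Real.mul_rpow (by positivity)
        (abs_nonneg v), ← Real.rpow_mul hr.le, mul_left_comm]
      gcongr
      calc r ^ (1 / α * β) ≤ r ^ (1 : ℝ) := Real.rpow_le_rpow_of_exponent_le hr1.le
            (by rw [one_div_mul_eq_div, div_le_one hα]; exact hβ)
        _ = r := Real.rpow_one r
    linarith [hpow α₁ (le_max_left _ _), hpow α₂ (le_max_right _ _)]

theorem stmt_9_general (T α₁ α₂ : ℝ) (hT : 0 < T)
    (hmax : 1 < max α₁ α₂)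
    (z : ℂ) (hz : z ≠ 0)
    (harg : z.arg ∈ Set.Icc (-(3 * Real.pi / 4)) (3 * Real.pi / 4)) :
    (1 / 4) * (∫ v : ℝ, 1 / (1 + T * |v| ^ α₁ + T * |v| ^ α₂)) *
        min (‖z‖ ^ (1 / max α₁ α₂ - 1)) 1 ≤
      ‖Phi T α₁ α₂ z‖ := by
  have harg' : |arg z| ≤ 3 * Real.pi / 4 := abs_le.2 harg
  have hr : 0 < ‖z‖ := norm_pos_iff.2 hz
  have hrz : 0 < ‖z‖ + z.re := by linarith [norm_le_eight_mul_norm_add_re harg']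
  have hPhi : (‖z‖ + z.re) * ∫ v : ℝ, (‖z‖ + (T * |v| ^ α₁ + T * |v| ^ α₂))⁻¹ ≤
      ‖(‖z‖ : ℂ) + z‖ * ‖Phi T α₁ α₂ z‖ :=
    mul_integral_le_norm_mul_norm_integral (Measurable.aemeasurable (by fun_prop))
      (fun v ↦ by positivity) (integrable_inv_add_rpow_add_rpow hr hT hmax)
  have hJ : ∫ v : ℝ, (‖z‖ + (T * |v| ^ α₁ + T * |v| ^ α₂))⁻¹ ≤ 4 * ‖Phi T α₁ α₂ z‖ := by
    refine le_of_mul_le_mul_left ?_ hrz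
    calc _ ≤ _ := hPhi
      _ ≤ 4 * (‖z‖ + z.re) * ‖Phi T α₁ α₂ z‖ := by
          gcongr; exact norm_norm_add_self_le_four_mul harg'
      _ = _ := by ring
  have hscale := mul_min_rpow_le_integral_inv_add hT hmax hr
  simp only [one_div, add_assoc] at hscale ⊢
  linarith

theorem stmt_9 (T α₁ α₂ : ℝ) (hT : 0 < T)
    (h1 : α₁ ∈ Set.Ioc (0 : ℝ) 2) (h2 : α₂ ∈ Set.Ioc (0 : ℝ) 2) (hmax : 1 < max α₁ α₂)
    (z : ℂ) (hz : z ≠ 0)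
    (harg : z.arg ∈ Set.Icc (-(3 * Real.pi / 4)) (3 * Real.pi / 4)) :
    (1 / 4) * (∫ v : ℝ, 1 / (1 + T * |v| ^ α₁ + T * |v| ^ α₂)) *
        min (‖z‖ ^ (1 / max α₁ α₂ - 1)) 1 ≤
      ‖Phi T α₁ α₂ z‖ :=
  stmt_9_general T α₁ α₂ hT hmax z hz harg
end

section
/- Let T > 0 and α₁, α₂ ∈ (0,2] with max{α₁,α₂} > 1. For every nonzero z ∈ ℂ with arg z ∈ [-3π/4, 3π/4], one has Re(Φ(z)) ≥ −(√2/2) · |Φ(z)| (equivalently, cos(arg Φ(z)) ≥ −√2/2). -/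
open MeasureTheory

/-!
For `Im z ≥ 0` and `Re z + Im z ≥ 0` (i.e. `0 ≤ arg z ≤ 3π/4`) every `z + c` with `c ≥ 0` lies in
the same sector, so every `(z + c)⁻¹` lies in the closed convex cone `-3π/4 ≤ arg w ≤ 0`. Being
cut out by two linear inequalities, that cone contains the integral `Φ(z)` too, and on it
`cos (arg w) ≥ -√2/2`. The case `Im z < 0` follows from `Φ(conj z) = conj Φ(z)`.
-/

open Real ComplexConjugate

/-- The closed sector `-3π/4 ≤ arg w ≤ 0`, together with `0`. -/
def lowerSector : Set ℂ := {w | w.im ≤ 0 ∧ w.im ≤ w.re}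

lemma inv_mem_lowerSector {w : ℂ} (him : 0 ≤ w.im) (hre : 0 ≤ w.re + w.im) :
    w⁻¹ ∈ lowerSector := by
  have hn : 0 ≤ Complex.normSq w := Complex.normSq_nonneg w
  simp only [lowerSector, Set.mem_ofPred_eq, Complex.inv_re, Complex.inv_im]
  constructor
  · exact div_nonpos_of_nonpos_of_nonneg (neg_nonpos.mpr him) hn
  · exact div_le_div_of_nonneg_right (by linarith) hn

lemma integral_mem_lowerSector {X : Type*} [MeasurableSpace X] {μ : Measure X} {f : X → ℂ}
    (hf : ∀ x, f x ∈ lowerSector) : ∫ x, f x ∂μ ∈ lowerSector := by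
  by_cases hfi : Integrable f μ
  · have hre : (∫ x, f x ∂μ).re = ∫ x, (f x).re ∂μ :=
      (Complex.reCLM.integral_comp_comm hfi).symm
    have him : (∫ x, f x ∂μ).im = ∫ x, (f x).im ∂μ :=
      (Complex.imCLM.integral_comp_comm hfi).symm
    rw [lowerSector, Set.mem_ofPred_eq, hre, him]
    exact ⟨integral_nonpos fun x => (hf x).1, integral_mono hfi.im hfi.re fun x => (hf x).2⟩
  · rw [integral_undef hfi]
    exact ⟨le_rfl, le_rfl⟩

lemma neg_sqrt_two_div_two_mul_norm_le_re_s10 {w : ℂ} (hw : w ∈ lowerSector) :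
    -(√2 / 2) * ‖w‖ ≤ w.re := by
  obtain ⟨him, hre⟩ := hw
  have hnorm : ‖w‖ ^ 2 = w.re ^ 2 + w.im ^ 2 := by
    rw [Complex.sq_norm, Complex.normSq_apply]; ring
  have hsqrt : √2 ^ 2 = 2 := sq_sqrt zero_le_two
  have : 0 ≤ √2 * ‖w‖ := by positivity
  nlinarith [sq_nonneg (√2 * ‖w‖ + 2 * w.re)]

lemma re_add_abs_im_nonneg {z : ℂ}
    (harg : z.arg ∈ Set.Icc (-(3 * π / 4)) (3 * π / 4)) : 0 ≤ z.re + |z.im| := by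
  have habs : |z.arg| ≤ 3 * π / 4 := abs_le.mpr harg
  -- `cos t + sin t = √2 sin (t + π/4)` with `t = |arg z| ∈ [0, 3π/4]`
  have hsin : 0 ≤ sin (|z.arg| + π / 4) :=
    sin_nonneg_of_nonneg_of_le_pi (by positivity) (by linarith)
  rw [sin_add, cos_pi_div_four, sin_pi_div_four] at hsin
  have htrig : 0 ≤ cos z.arg + |sin z.arg| := by
    rw [← cos_abs, abs_sin_eq_sin_abs_of_abs_le_pi (by linarith [pi_pos])]
    nlinarith [sqrt_pos.mpr (zero_lt_two' ℝ)]
  rw [← Complex.norm_mul_cos_arg, ← Complex.norm_mul_sin_arg, abs_mul, abs_norm, ← mul_add]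
  positivity

lemma Phi_conj (T α₁ α₂ : ℝ) (z : ℂ) : Phi T α₁ α₂ (conj z) = conj (Phi T α₁ α₂ z) := by
  simp only [Phi, ← integral_conj, map_inv₀, map_add, Complex.conj_ofReal]

lemma Phi_mem_lowerSector {T : ℝ} (hT : 0 ≤ T) (α₁ α₂ : ℝ) {z : ℂ}
    (him : 0 ≤ z.im) (hre : 0 ≤ z.re + z.im) : Phi T α₁ α₂ z ∈ lowerSector := by
  refine integral_mem_lowerSector fun v => inv_mem_lowerSector ?_ ?_
  · simpa using him
  · have : 0 ≤ T * |v| ^ α₁ + T * |v| ^ α₂ := by positivity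
    simp only [Complex.add_re, Complex.add_im, Complex.ofReal_re, Complex.ofReal_im]
    linarith

theorem stmt_10_general (T α₁ α₂ : ℝ) (hT : 0 < T)
    (z : ℂ)
    (harg : z.arg ∈ Set.Icc (-(3 * Real.pi / 4)) (3 * Real.pi / 4)) :
    -(Real.sqrt 2 / 2) * ‖Phi T α₁ α₂ z‖ ≤ (Phi T α₁ α₂ z).re := by
  have hre := re_add_abs_im_nonneg harg
  rcases le_or_gt 0 z.im with him | him
  · rw [abs_of_nonneg him] at hre
    exact neg_sqrt_two_div_two_mul_norm_le_re_s10 (Phi_mem_lowerSector hT.le α₁ α₂ him hre)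
  · rw [abs_of_neg him] at hre
    have hconj := neg_sqrt_two_div_two_mul_norm_le_re_s10 <|
      Phi_mem_lowerSector hT.le α₁ α₂ (z := conj z) (by simpa using him.le) (by simpa using hre)
    rwa [Phi_conj, Complex.norm_conj, Complex.conj_re] at hconj

theorem stmt_10 (T α₁ α₂ : ℝ) (hT : 0 < T)
    (h1 : α₁ ∈ Set.Ioc (0 : ℝ) 2) (h2 : α₂ ∈ Set.Ioc (0 : ℝ) 2) (hmax : 1 < max α₁ α₂)
    (z : ℂ) (hz : z ≠ 0)
    (harg : z.arg ∈ Set.Icc (-(3 * Real.pi / 4)) (3 * Real.pi / 4)) :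
    -(Real.sqrt 2 / 2) * ‖Phi T α₁ α₂ z‖ ≤ (Phi T α₁ α₂ z).re :=
  stmt_10_general T α₁ α₂ hT z harg
end

section
/- Let T > 0 and α₁, α₂ ∈ (0,2] with min{α₁,α₂} < 1 and max{α₁,α₂} > 1, and let t ∈ [-3π/4, 3π/4]. Then lim_{R→0+} Φ(R e^{it}) = ∫_ℝ 1/(T|v|^{α₁} + T|v|^{α₂}) dv, where the limit is taken in ℂ. -/
/-! Dominated convergence. In the sector `|arg z| ≤ 3π/4` one has `‖z + a‖ ≥ a / √2` for every
`a ≥ 0`, so the integrands are dominated by `√2 / (T|v|^{α₁} + T|v|^{α₂})`. This majorant is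
integrable because the smaller exponent is `< 1` (integrability at the origin) and the larger one
is `> 1` (integrability at infinity); in any finite dimension `d` the same holds with `d` in
place of `1`. -/

open MeasureTheory Filter

open Set Metric Module Topology Real

lemma inv_rpow_add_rpow_le_rpow_neg_left {x a b : ℝ} (hx : 0 < x) :
    (x ^ a + x ^ b)⁻¹ ≤ x ^ (-a) := by
  rw [Real.rpow_neg hx.le]
  exact inv_anti₀ (by positivity) (le_add_of_nonneg_right (by positivity))

lemma inv_rpow_add_rpow_le_rpow_neg_right {x a b : ℝ} (hx : 0 < x) :
    (x ^ a + x ^ b)⁻¹ ≤ x ^ (-b) := by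
  rw [add_comm]
  exact inv_rpow_add_rpow_le_rpow_neg_left hx

lemma rpow_neg_le_two_rpow_mul_one_add_rpow_neg {x b : ℝ} (hx : 1 ≤ x) (hb : 0 ≤ b) :
    x ^ (-b) ≤ 2 ^ b * (1 + x) ^ (-b) := by
  have hx0 : 0 < x := by linarith
  rw [Real.rpow_neg hx0.le, Real.rpow_neg (by linarith), ← div_eq_mul_inv,
    le_div_iff₀ (by positivity), ← div_eq_inv_mul, div_le_iff₀ (by positivity),
    ← Real.mul_rpow zero_le_two hx0.le]
  exact Real.rpow_le_rpow (by positivity) (by linarith) hb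

section Integrability

variable {E : Type*} [NormedAddCommGroup E] [NormedSpace ℝ E] [FiniteDimensional ℝ E]
  [MeasurableSpace E] [BorelSpace E] {μ : Measure E} [μ.IsAddHaarMeasure]

theorem integrable_inv_norm_rpow_add_norm_rpow [Nontrivial E] {a b : ℝ}
    (ha : a < finrank ℝ E) (hb : finrank ℝ E < b) :
    Integrable (fun x : E => (‖x‖ ^ a + ‖x‖ ^ b)⁻¹) μ := by
  have hmeas : AEStronglyMeasurable (fun x : E => (‖x‖ ^ a + ‖x‖ ^ b)⁻¹) μ :=
    Measurable.aestronglyMeasurable (by fun_prop)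
  have hd : 1 ≤ finrank ℝ E := finrank_pos
  have hb0 : 0 ≤ b := by linarith [(Nat.cast_nonneg (finrank ℝ E) : (0 : ℝ) ≤ _)]
  have hball : IntegrableOn (fun x : E => (‖x‖ ^ a + ‖x‖ ^ b)⁻¹) (ball 0 1) μ := by
    refine integrableOn_ball_of_norm_le_rpow (C := 1) hd ha ?_ hmeas
    refine ae_restrict_of_ae ?_
    filter_upwards [compl_mem_ae_iff.2 (measure_singleton (0 : E))] with x hx
    rw [one_mul, Real.norm_of_nonneg (inv_nonneg.2 (by positivity))]
    exact inv_rpow_add_rpow_le_rpow_neg_left (norm_pos_iff.2 hx)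
  have hcompl : IntegrableOn (fun x : E => (‖x‖ ^ a + ‖x‖ ^ b)⁻¹) (ball 0 1)ᶜ μ := by
    refine Integrable.mono' ((integrable_one_add_norm hb).const_mul (2 ^ b)).integrableOn
      hmeas.restrict ?_
    refine (ae_restrict_iff' measurableSet_ball.compl).2 (ae_of_all _ fun x hx => ?_)
    have hx1 : 1 ≤ ‖x‖ := by simpa using hx
    rw [Real.norm_of_nonneg (inv_nonneg.2 (by positivity))]
    exact (inv_rpow_add_rpow_le_rpow_neg_right (by linarith)).trans
      (rpow_neg_le_two_rpow_mul_one_add_rpow_neg hx1 hb0)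
  simpa using hball.union hcompl

end Integrability

lemma integrable_inv_abs_rpow_add_abs_rpow {a b : ℝ} (hmin : min a b < 1) (hmax : 1 < max a b) :
    Integrable fun v : ℝ => (|v| ^ a + |v| ^ b)⁻¹ := by
  simp_rw [← Real.norm_eq_abs]
  rcases le_total a b with hab | hba
  · rw [min_eq_left hab] at hmin
    rw [max_eq_right hab] at hmax
    exact integrable_inv_norm_rpow_add_norm_rpow (by simpa using hmin) (by simpa using hmax)
  · rw [min_eq_right hba] at hmin
    rw [max_eq_left hba] at hmax
    simp_rw [add_comm (‖_‖ ^ a)]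
    exact integrable_inv_norm_rpow_add_norm_rpow (by simpa using hmin) (by simpa using hmax)

lemma div_sqrt_two_le_norm_add_ofReal {z : ℂ} {a : ℝ} (hz : -(√2 / 2) * ‖z‖ ≤ z.re)
    (ha : 0 ≤ a) : a / √2 ≤ ‖z + a‖ := by
  have hs : √2 ^ 2 = 2 := Real.sq_sqrt zero_le_two
  have hnorm : ‖z + a‖ ^ 2 = ‖z‖ ^ 2 + 2 * a * z.re + a ^ 2 := by
    simp only [Complex.sq_norm, Complex.normSq_add, Complex.normSq_ofReal, Complex.conj_ofReal,
      Complex.mul_re, Complex.ofReal_re, Complex.ofReal_im]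
    ring
  -- `‖z + a‖² ≥ ‖z‖² - √2 a ‖z‖ + a² = (‖z‖ - a/√2)² + a²/2`
  refine le_of_pow_le_pow_left₀ two_ne_zero (norm_nonneg _) ?_
  rw [hnorm, div_pow, hs]
  nlinarith [sq_nonneg (√2 * ‖z‖ - a), mul_le_mul_of_nonneg_left hz (by positivity : 0 ≤ 2 * a)]

lemma neg_sqrt_two_div_two_le_cos {t : ℝ} (ht : |t| ≤ 3 * π / 4) : -(√2 / 2) ≤ Real.cos t := by
  rw [← Real.cos_abs, ← Real.cos_pi_div_four, ← Real.cos_pi_sub]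
  exact Real.cos_le_cos_of_nonneg_of_le_pi (abs_nonneg t) (by linarith [Real.pi_pos])
    (by linarith)

lemma neg_sqrt_two_div_two_mul_norm_le_re_s13 {R t : ℝ} (hR : 0 ≤ R) (ht : |t| ≤ 3 * π / 4) :
    -(√2 / 2) * ‖(R : ℂ) * Complex.exp (t * Complex.I)‖ ≤
      ((R : ℂ) * Complex.exp (t * Complex.I)).re := by
  rw [norm_mul, Complex.norm_exp_ofReal_mul_I, Complex.re_ofReal_mul, Complex.exp_ofReal_mul_I_re,
    Complex.norm_real, Real.norm_of_nonneg hR, mul_one, mul_comm]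
  exact mul_le_mul_of_nonneg_left (neg_sqrt_two_div_two_le_cos ht) hR

theorem tendsto_integral_inv_add_ofReal {α ι : Type*} [MeasurableSpace α] {μ : Measure α}
    {l : Filter ι} [l.IsCountablyGenerated] {g : α → ℝ} {z : ι → ℂ}
    (hg_meas : AEMeasurable g μ) (hg_pos : ∀ᵐ x ∂μ, 0 < g x)
    (hg_int : Integrable (fun x => (g x)⁻¹) μ) (hz : Tendsto z l (𝓝 0))
    (hz_sector : ∀ᶠ i in l, -(√2 / 2) * ‖z i‖ ≤ (z i).re) :
    Tendsto (fun i => ∫ x, (z i + g x)⁻¹ ∂μ) l (𝓝 (∫ x, (g x)⁻¹ ∂μ : ℝ)) := by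
  rw [← integral_complex_ofReal]
  refine tendsto_integral_filter_of_dominated_convergence (fun x => √2 * (g x)⁻¹)
    (Eventually.of_forall fun i => ?_) ?_ (hg_int.const_mul _) ?_
  · exact (measurable_inv.comp_aemeasurable (aemeasurable_const.add
      (Complex.measurable_ofReal.comp_aemeasurable hg_meas))).aestronglyMeasurable
  · filter_upwards [hz_sector] with i hi
    filter_upwards [hg_pos] with x hx
    rw [norm_inv, ← div_eq_mul_inv, ← inv_div]
    exact inv_anti₀ (by positivity) (div_sqrt_two_le_norm_add_ofReal hi hx.le)
  · filter_upwards [hg_pos] with x hx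
    simpa using (hz.add_const (g x : ℂ)).inv₀ (by simpa using hx.ne')

theorem stmt_13_general (T α₁ α₂ : ℝ) (hT : 0 < T)
    (hmin : min α₁ α₂ < 1) (hmax : 1 < max α₁ α₂)
    (t : ℝ) (ht : t ∈ Set.Icc (-(3 * Real.pi / 4)) (3 * Real.pi / 4)) :
    Tendsto (fun R : ℝ => Phi T α₁ α₂ (R * Complex.exp (t * Complex.I)))
      (nhdsWithin 0 (Set.Ioi 0))
      (nhds (((∫ v : ℝ, 1 / (T * |v| ^ α₁ + T * |v| ^ α₂) : ℝ) : ℂ))) := by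
  have hg_int : Integrable fun v : ℝ => (T * |v| ^ α₁ + T * |v| ^ α₂)⁻¹ := by
    simp_rw [← mul_add, mul_inv]
    exact (integrable_inv_abs_rpow_add_abs_rpow hmin hmax).const_mul _
  have hg_pos : ∀ᵐ v : ℝ, 0 < T * |v| ^ α₁ + T * |v| ^ α₂ := by
    filter_upwards [compl_mem_ae_iff.2 (measure_singleton (0 : ℝ))] with v hv
    have : 0 < |v| := abs_pos.2 hv
    positivity
  have hz : Tendsto (fun R : ℝ => (R : ℂ) * Complex.exp (t * Complex.I)) (𝓝[>] 0) (𝓝 0) := by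
    refine Tendsto.mono_left ?_ nhdsWithin_le_nhds
    simpa using (Complex.continuous_ofReal.tendsto 0).mul_const (Complex.exp (t * Complex.I))
  simp_rw [one_div]
  exact tendsto_integral_inv_add_ofReal (by fun_prop) hg_pos hg_int hz
    (eventually_nhdsWithin_of_forall fun R hR =>
      neg_sqrt_two_div_two_mul_norm_le_re_s13 (le_of_lt hR) (abs_le.2 ht))

theorem stmt_13 (T α₁ α₂ : ℝ) (hT : 0 < T)
    (h1 : α₁ ∈ Set.Ioc (0 : ℝ) 2) (h2 : α₂ ∈ Set.Ioc (0 : ℝ) 2)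
    (hmin : min α₁ α₂ < 1) (hmax : 1 < max α₁ α₂)
    (t : ℝ) (ht : t ∈ Set.Icc (-(3 * Real.pi / 4)) (3 * Real.pi / 4)) :
    Tendsto (fun R : ℝ => Phi T α₁ α₂ (R * Complex.exp (t * Complex.I)))
      (nhdsWithin 0 (Set.Ioi 0))
      (nhds (((∫ v : ℝ, 1 / (T * |v| ^ α₁ + T * |v| ^ α₂) : ℝ) : ℂ))) :=
  stmt_13_general T α₁ α₂ hT hmin hmax t ht
end

section
/- Let T > 0, α₁, α₂ ∈ (0,2] with α* := max{α₁,α₂} > 1, λ > 0, and let z ∈ ℂ be nonzero with arg z ∈ [-3π/4, 3π/4]. Then |λ / (1 + λ T (2π)^{-1} Φ(z))| ≤ (32π/T) · (∫_ℝ 1/(1 + T|v|^{α₁} + T|v|^{α₂}) dv)^{-1} · (max{|z|, 1})^{1 − 1/α*}. -/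
open MeasureTheory

open Set

lemma integrable_of_even_of_integrableOn_Ici {E : Type*} [NormedAddCommGroup E] {f : ℝ → E}
    (hf : ∀ x, f (-x) = f x) (h : IntegrableOn f (Ici 0)) : Integrable f := by
  rw [← integrableOn_univ, ← Iio_union_Ici (a := (0 : ℝ)), integrableOn_union]
  refine ⟨?_, h⟩
  rw [← (Measure.measurePreserving_neg (volume : Measure ℝ)).integrableOn_comp_preimage
      (Homeomorph.neg ℝ).measurableEmbedding]
  simp only [Function.comp_def, hf, neg_preimage, neg_Iio, neg_zero]
  exact h.mono_set Ioi_subset_Ici_self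

lemma integrable_of_even_of_norm_le_rpow_neg {f : ℝ → ℝ} {C β : ℝ} (hc : Continuous f)
    (hf : ∀ x, f (-x) = f x) (hβ : 1 < β) (hle : ∀ x, 1 < x → ‖f x‖ ≤ C * x ^ (-β)) :
    Integrable f := by
  refine integrable_of_even_of_integrableOn_Ici hf ?_
  rw [← Icc_union_Ioi_eq_Ici zero_le_one, integrableOn_union]
  refine ⟨hc.integrableOn_Icc, ?_⟩
  have hmajorant := (integrableOn_Ioi_rpow_of_lt (a := -β) (by linarith) one_pos).const_mul C
  refine hmajorant.mono' hc.aestronglyMeasurable.restrict ?_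
  filter_upwards [ae_restrict_mem measurableSet_Ioi] with x hx using hle x hx

lemma rpow_max_le_rpow_add_rpow {x : ℝ} (hx : 0 ≤ x) (a b : ℝ) :
    x ^ max a b ≤ x ^ a + x ^ b := by
  rcases max_cases a b with ⟨h, _⟩ | ⟨h, _⟩ <;> rw [h]
  · linarith [Real.rpow_nonneg hx b]
  · linarith [Real.rpow_nonneg hx a]

lemma abs_rpow_inv_mul_rpow_le {s α β : ℝ} (hs : 1 ≤ s) (hβ : 0 < β) (hαβ : α ≤ β) (u : ℝ) :
    |s ^ β⁻¹ * u| ^ α ≤ s * |u| ^ α := by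
  have hs0 : 0 < s := by linarith
  rw [abs_mul, abs_of_pos (by positivity), Real.mul_rpow (by positivity) (abs_nonneg u),
    ← Real.rpow_mul hs0.le]
  gcongr
  calc s ^ (β⁻¹ * α) ≤ s ^ (1 : ℝ) :=
        Real.rpow_le_rpow_of_exponent_le hs (by rwa [inv_mul_le_iff₀ hβ, mul_one])
    _ = s := Real.rpow_one s

lemma inv_sixteen_le_cos_half {x : ℝ} (hx : x ∈ Icc (-(3 * Real.pi / 4)) (3 * Real.pi / 4)) :
    16⁻¹ ≤ Real.cos (x / 2) := by
  have hsq : (x / 2) ^ 2 ≤ (3 * Real.pi / 8) ^ 2 := by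
    apply sq_le_sq' <;> linarith [hx.1, hx.2]
  nlinarith [Real.one_sub_sq_div_two_le_cos (x := x / 2), Real.pi_lt_d2, Real.pi_pos]

section HalfArgRotation

open Complex ComplexConjugate

lemma re_exp_half_arg_mul_conj_add_ofReal (z : ℂ) (t : ℝ) :
    (exp ((z.arg / 2 : ℝ) * I) * conj (z + t)).re = (‖z‖ + t) * Real.cos (z.arg / 2) := by
  have hcos := Real.cos_sub z.arg (z.arg / 2)
  rw [show z.arg - z.arg / 2 = z.arg / 2 by ring] at hcos
  simp only [mul_re, conj_re, conj_im, add_re, add_im, ofReal_re, ofReal_im,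
    exp_ofReal_mul_I_re, exp_ofReal_mul_I_im, ← norm_mul_cos_arg z, ← norm_mul_sin_arg z]
  linear_combination (-‖z‖) * hcos

lemma add_mul_cos_half_arg_le_norm_add_ofReal (z : ℂ) (t : ℝ) :
    (‖z‖ + t) * Real.cos (z.arg / 2) ≤ ‖z + t‖ := by
  have h := re_le_norm (exp ((z.arg / 2 : ℝ) * I) * conj (z + t))
  rwa [re_exp_half_arg_mul_conj_add_ofReal, norm_mul, norm_exp_ofReal_mul_I, norm_conj,
    one_mul] at h

lemma cos_half_arg_mul_inv_le_re_exp_mul_inv {z : ℂ} (hz : z ≠ 0) {t : ℝ} (ht : 0 ≤ t)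
    (hc : 0 < Real.cos (z.arg / 2)) :
    Real.cos (z.arg / 2) * (‖z‖ + t)⁻¹ ≤ (exp ((z.arg / 2 : ℝ) * I) * (z + t)⁻¹).re := by
  have hRt : 0 < ‖z‖ + t := by positivity
  have hlow := add_mul_cos_half_arg_le_norm_add_ofReal z t
  have hpos : 0 < ‖z + t‖ := lt_of_lt_of_le (by positivity) hlow
  have hup : ‖z + t‖ ^ 2 ≤ (‖z‖ + t) ^ 2 := by
    gcongr
    simpa [abs_of_nonneg ht] using norm_add_le z (t : ℂ)
  have hinv : exp ((z.arg / 2 : ℝ) * I) * (z + t)⁻¹ =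
      ((normSq (z + t))⁻¹ : ℝ) * (exp ((z.arg / 2 : ℝ) * I) * conj (z + t)) := by
    rw [inv_def]
    ring
  rw [hinv, re_ofReal_mul, re_exp_half_arg_mul_conj_add_ofReal, normSq_eq_norm_sq, ← div_eq_inv_mul,
    ← div_eq_mul_inv, div_le_div_iff₀ hRt (by positivity)]
  nlinarith

end HalfArgRotation

noncomputable def realPhi (T α₁ α₂ r : ℝ) : ℝ :=
  ∫ v : ℝ, (r + T * |v| ^ α₁ + T * |v| ^ α₂)⁻¹

section RealPhi

variable {T α₁ α₂ : ℝ}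

lemma integrable_inv_add_rpow {r : ℝ} (hr : 0 < r) (hT : 0 < T) (hα₁ : 0 ≤ α₁) (hα₂ : 0 ≤ α₂)
    (hmax : 1 < max α₁ α₂) :
    Integrable fun v : ℝ => (r + T * |v| ^ α₁ + T * |v| ^ α₂)⁻¹ := by
  refine integrable_of_even_of_norm_le_rpow_neg (C := T⁻¹) ?_ (by simp [abs_neg]) hmax ?_
  · exact Continuous.inv₀ (by fun_prop (disch := assumption)) fun v => by positivity
  intro v hv
  have hv0 : 0 < v := by linarith
  have hdom : T * v ^ max α₁ α₂ ≤ r + T * |v| ^ α₁ + T * |v| ^ α₂ := by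
    have := mul_le_mul_of_nonneg_left (rpow_max_le_rpow_add_rpow hv0.le α₁ α₂) hT.le
    rw [abs_of_pos hv0]
    linarith
  rw [Real.norm_of_nonneg (by positivity), Real.rpow_neg hv0.le, ← mul_inv]
  exact inv_anti₀ (by positivity) hdom

lemma realPhi_pos {r : ℝ} (hr : 0 < r) (hT : 0 < T) (hα₁ : 0 ≤ α₁) (hα₂ : 0 ≤ α₂)
    (hmax : 1 < max α₁ α₂) : 0 < realPhi T α₁ α₂ r := by
  rw [realPhi, integral_pos_iff_support_of_nonneg (fun v => by positivity)
    (integrable_inv_add_rpow hr hT hα₁ hα₂ hmax)]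
  have : Function.support (fun v : ℝ => (r + T * |v| ^ α₁ + T * |v| ^ α₂)⁻¹) = univ :=
    eq_univ_of_forall fun v => by simp only [Function.mem_support]; positivity
  simp [this]

lemma realPhi_antitoneOn (hT : 0 < T) (hα₁ : 0 ≤ α₁) (hα₂ : 0 ≤ α₂) (hmax : 1 < max α₁ α₂) :
    AntitoneOn (realPhi T α₁ α₂) (Ioi 0) := fun r hr r' hr' hrr' =>
  integral_mono (integrable_inv_add_rpow hr' hT hα₁ hα₂ hmax)
    (integrable_inv_add_rpow hr hT hα₁ hα₂ hmax) fun v => by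
      have : (0 : ℝ) < r := hr
      gcongr

lemma rpow_mul_realPhi_one_le {s : ℝ} (hs : 1 ≤ s) (hT : 0 < T) (hα₁ : 0 ≤ α₁) (hα₂ : 0 ≤ α₂)
    (hmax : 1 < max α₁ α₂) :
    s ^ ((max α₁ α₂)⁻¹ - 1) * realPhi T α₁ α₂ 1 ≤ realPhi T α₁ α₂ s := by
  set β := max α₁ α₂
  have hs0 : 0 < s := by linarith
  have hβ : 0 < β := by linarith
  set a := s ^ β⁻¹
  have ha : 0 < a := by positivity
  have hpointwise (u : ℝ) : s⁻¹ * (1 + T * |u| ^ α₁ + T * |u| ^ α₂)⁻¹ ≤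
      (s + T * |a * u| ^ α₁ + T * |a * u| ^ α₂)⁻¹ := by
    rw [← mul_inv]
    refine inv_anti₀ (by positivity) ?_
    have h₁ := abs_rpow_inv_mul_rpow_le hs hβ (le_max_left α₁ α₂) u
    have h₂ := abs_rpow_inv_mul_rpow_le hs hβ (le_max_right α₁ α₂) u
    nlinarith
  have hsubst : ∫ u : ℝ, (s + T * |a * u| ^ α₁ + T * |a * u| ^ α₂)⁻¹ =
      a⁻¹ * realPhi T α₁ α₂ s := by
    rw [Measure.integral_comp_mul_left (fun v => (s + T * |v| ^ α₁ + T * |v| ^ α₂)⁻¹) a,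
      abs_of_pos (inv_pos.2 ha), smul_eq_mul, realPhi]
  calc s ^ (β⁻¹ - 1) * realPhi T α₁ α₂ 1
      = a * ∫ u : ℝ, s⁻¹ * (1 + T * |u| ^ α₁ + T * |u| ^ α₂)⁻¹ := by
        rw [integral_const_mul, Real.rpow_sub hs0, Real.rpow_one, realPhi]
        ring
    _ ≤ a * ∫ u : ℝ, (s + T * |a * u| ^ α₁ + T * |a * u| ^ α₂)⁻¹ := by
        refine mul_le_mul_of_nonneg_left (integral_mono ?_ ?_ hpointwise) ha.le
        · exact (integrable_inv_add_rpow one_pos hT hα₁ hα₂ hmax).const_mul _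
        · exact (integrable_inv_add_rpow hs0 hT hα₁ hα₂ hmax).comp_mul_left' ha.ne'
    _ = realPhi T α₁ α₂ s := by
        rw [hsubst]
        field_simp

open Complex in
lemma cos_half_arg_mul_realPhi_le_re_exp_mul_Phi {z : ℂ} (hz : z ≠ 0)
    (hc : 0 < Real.cos (z.arg / 2)) (hT : 0 < T) (hα₁ : 0 ≤ α₁) (hα₂ : 0 ≤ α₂)
    (hmax : 1 < max α₁ α₂) :
    Real.cos (z.arg / 2) * realPhi T α₁ α₂ ‖z‖ ≤
      (exp ((z.arg / 2 : ℝ) * I) * Phi T α₁ α₂ z).re := by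
  set c := Real.cos (z.arg / 2)
  set w := exp ((z.arg / 2 : ℝ) * I)
  set ρ : ℝ → ℝ := fun v => T * |v| ^ α₁ + T * |v| ^ α₂
  have hρ (v : ℝ) : 0 ≤ ρ v := by positivity
  have hlow (v : ℝ) : 0 < (‖z‖ + ρ v) * c := by positivity
  have hJ : Integrable fun v : ℝ => (‖z‖ + ρ v)⁻¹ := by
    simpa only [ρ, ← add_assoc] using integrable_inv_add_rpow (norm_pos_iff.2 hz) hT hα₁ hα₂ hmax
  have hint : Integrable fun v : ℝ => (z + (ρ v : ℂ))⁻¹ := by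
    refine (hJ.const_mul c⁻¹).mono' ?_ (ae_of_all _ fun v => ?_)
    · refine Continuous.aestronglyMeasurable <|
        Continuous.inv₀ (by fun_prop (disch := assumption)) fun v h => ?_
      have := (hlow v).trans_le (add_mul_cos_half_arg_le_norm_add_ofReal z (ρ v))
      simp [h] at this
    · rw [norm_inv, ← mul_inv, mul_comm]
      exact inv_anti₀ (hlow v) (add_mul_cos_half_arg_le_norm_add_ofReal z (ρ v))
  calc c * realPhi T α₁ α₂ ‖z‖ = ∫ v : ℝ, c * (‖z‖ + ρ v)⁻¹ := by
        simp only [realPhi, ρ, integral_const_mul, add_assoc]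
    _ ≤ ∫ v : ℝ, (w * (z + (ρ v : ℂ))⁻¹).re :=
        integral_mono (hJ.const_mul c)
          (hint.const_mul w).re fun v => cos_half_arg_mul_inv_le_re_exp_mul_inv hz (hρ v) hc
    _ = (w * Phi T α₁ α₂ z).re := by
        rw [Phi, ← integral_const_mul]
        exact integral_re (hint.const_mul w)

open Complex in
lemma mul_realPhi_le_norm_one_add_mul_Phi {z : ℂ} (hz : z ≠ 0) (hc : 0 < Real.cos (z.arg / 2))
    {k : ℝ} (hk : 0 ≤ k) (hT : 0 < T) (hα₁ : 0 ≤ α₁) (hα₂ : 0 ≤ α₂) (hmax : 1 < max α₁ α₂) :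
    k * (Real.cos (z.arg / 2) * realPhi T α₁ α₂ ‖z‖) ≤ ‖1 + (k : ℂ) * Phi T α₁ α₂ z‖ := by
  set w := exp ((z.arg / 2 : ℝ) * I)
  have hre := cos_half_arg_mul_realPhi_le_re_exp_mul_Phi hz hc hT hα₁ hα₂ hmax
  calc k * (Real.cos (z.arg / 2) * realPhi T α₁ α₂ ‖z‖)
      ≤ Real.cos (z.arg / 2) + k * (w * Phi T α₁ α₂ z).re := by
        nlinarith [mul_le_mul_of_nonneg_left hre hk]
    _ = (w * (1 + k * Phi T α₁ α₂ z)).re := by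
        rw [mul_add, mul_one, add_re, exp_ofReal_mul_I_re, mul_left_comm, re_ofReal_mul]
    _ ≤ ‖w * (1 + k * Phi T α₁ α₂ z)‖ := re_le_norm _
    _ = ‖1 + (k : ℂ) * Phi T α₁ α₂ z‖ := by
        rw [norm_mul, norm_exp_ofReal_mul_I, one_mul]

end RealPhi

theorem stmt_17 (T α₁ α₂ lam : ℝ) (hT : 0 < T)
    (h1 : α₁ ∈ Set.Ioc (0 : ℝ) 2) (h2 : α₂ ∈ Set.Ioc (0 : ℝ) 2) (hmax : 1 < max α₁ α₂)
    (hlam : 0 < lam) (z : ℂ) (hz : z ≠ 0)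
    (harg : z.arg ∈ Set.Icc (-(3 * Real.pi / 4)) (3 * Real.pi / 4)) :
    ‖(lam : ℂ) / (1 + lam * T * (2 * Real.pi : ℝ)⁻¹ * Phi T α₁ α₂ z)‖ ≤
      32 * Real.pi / T * (∫ v : ℝ, 1 / (1 + T * |v| ^ α₁ + T * |v| ^ α₂))⁻¹ *
        max ‖z‖ 1 ^ (1 - 1 / max α₁ α₂) := by
  obtain ⟨hα₁, -⟩ := h1
  obtain ⟨hα₂, -⟩ := h2
  set β := max α₁ α₂
  set s := max ‖z‖ 1
  set k := lam * T * (2 * Real.pi)⁻¹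
  have hs : 0 < s := lt_max_of_lt_right one_pos
  have hk : 0 < k := by positivity
  have hcos := inv_sixteen_le_cos_half harg
  have hJ₁ := realPhi_pos one_pos hT hα₁.le hα₂.le hmax
  have hJz : s ^ (β⁻¹ - 1) * realPhi T α₁ α₂ 1 ≤ realPhi T α₁ α₂ ‖z‖ :=
    (rpow_mul_realPhi_one_le (le_max_right _ _) hT hα₁.le hα₂.le hmax).trans
      (realPhi_antitoneOn hT hα₁.le hα₂.le hmax (norm_pos_iff.2 hz) hs (le_max_left _ _))
  have hden : k * (16⁻¹ * (s ^ (β⁻¹ - 1) * realPhi T α₁ α₂ 1)) ≤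
      ‖1 + (k : ℂ) * Phi T α₁ α₂ z‖ := by
    refine le_trans ?_ (mul_realPhi_le_norm_one_add_mul_Phi hz (by linarith) hk.le hT hα₁.le
      hα₂.le hmax)
    exact mul_le_mul_of_nonneg_left (mul_le_mul hcos hJz (by positivity) (by linarith)) hk.le
  have hk_cast : (lam : ℂ) * T * (2 * Real.pi : ℝ)⁻¹ = (k : ℂ) := by
    simp only [k]
    push_cast
    ring
  have hJ₁_eq : ∫ v : ℝ, 1 / (1 + T * |v| ^ α₁ + T * |v| ^ α₂) = realPhi T α₁ α₂ 1 := by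
    simp only [one_div, realPhi]
  rw [hk_cast, hJ₁_eq, norm_div, Complex.norm_real, Real.norm_of_nonneg hlam.le]
  calc lam / ‖1 + (k : ℂ) * Phi T α₁ α₂ z‖
      ≤ lam / (k * (16⁻¹ * (s ^ (β⁻¹ - 1) * realPhi T α₁ α₂ 1))) :=
        div_le_div_of_nonneg_left hlam.le (by positivity) hden
    _ = 32 * Real.pi / T * (realPhi T α₁ α₂ 1)⁻¹ * s ^ (1 - 1 / β) := by
        rw [show β⁻¹ - 1 = -(1 - 1 / β) by ring, Real.rpow_neg hs.le]
        simp only [k]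
        field_simp
        ring
end

section
/- Let X be a non-negative real random variable, let α > 0 and A ≥ 0, and suppose lim_{λ→+∞} λ^α · E[e^{-λX}] = A. Then for every integer m ≥ 1 and all real coefficients a_1, ..., a_m, setting H(x) = ∑_{k=1}^m a_k x^k, one has lim_{λ→+∞} λ^α · E[H(e^{-λX})] = (A / Γ(1+α)) · ∫_0^∞ H(e^{-v^{1/α}}) dv. -/
open MeasureTheory Filter

/-!
Multiplying the exponent by `c > 0` rescales the Laplace transform `L(λ) = E[exp(-λX)]`, so
`λ^α L(cλ) → c^(-α) A`; on the other side `∫₀^∞ exp(-c v^(1/α)) dv = c^(-α) Γ(1 + α)`.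
Since `exp(-λX)^n = exp(-nλX)`, both sides are linear combinations of these with the same
coefficients `a k` and `c = k + 1`.
-/

lemma tendsto_rpow_mul_comp_const_mul {f : ℝ → ℝ} {α A c : ℝ} (hc : 0 < c)
    (h : Tendsto (fun t : ℝ => t ^ α * f t) atTop (nhds A)) :
    Tendsto (fun t : ℝ => t ^ α * f (c * t)) atTop (nhds (c ^ (-α) * A)) := by
  refine ((h.comp (tendsto_id.const_mul_atTop hc)).const_mul (c ^ (-α))).congr' ?_
  filter_upwards [eventually_ge_atTop 0] with t ht
  simp only [Function.comp_apply, id]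
  rw [Real.mul_rpow hc.le ht, ← mul_assoc, ← mul_assoc, ← Real.rpow_add hc, neg_add_cancel,
    Real.rpow_zero, one_mul]

lemma Real.exp_neg_pow (y : ℝ) (n : ℕ) : Real.exp (-y) ^ n = Real.exp (-(n * y)) := by
  rw [← Real.exp_nat_mul, mul_neg]

lemma integrableOn_exp_neg_mul_rpow_inv {α c : ℝ} (hα : 0 < α) (hc : 0 < c) :
    IntegrableOn (fun v : ℝ => Real.exp (-(c * v ^ (1 / α)))) (Set.Ioi 0) := by
  rw [← integrableOn_Ioi_comp_rpow_iff' _ hα.ne']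
  refine (integrableOn_rpow_mul_exp_neg_mul_rpow (s := α - 1) (p := 1)
    (by linarith) zero_lt_one hc).congr_fun (fun x hx => ?_) measurableSet_Ioi
  dsimp only
  rw [smul_eq_mul, ← Real.rpow_mul (le_of_lt hx), mul_one_div_cancel hα.ne', Real.rpow_one,
    neg_mul]

lemma integral_exp_neg_mul_rpow_inv {α c : ℝ} (hα : 0 < α) (hc : 0 < c) :
    ∫ v in Set.Ioi (0 : ℝ), Real.exp (-(c * v ^ (1 / α))) = c ^ (-α) * Real.Gamma (1 + α) := by
  simp_rw [← neg_mul]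
  rw [integral_exp_neg_mul_rpow (by positivity) hc, one_div_one_div, add_comm,
    show -1 / (1 / α) = -α by field_simp]

lemma integral_sum_mul_exp_neg_rpow_inv_pow {ι : Type*} (s : Finset ι) (a : ι → ℝ) {n : ι → ℕ}
    (hn : ∀ k ∈ s, 0 < n k) {α : ℝ} (hα : 0 < α) :
    ∫ v in Set.Ioi (0 : ℝ), ∑ k ∈ s, a k * Real.exp (-(v ^ (1 / α))) ^ n k
      = ∑ k ∈ s, a k * ((n k : ℝ) ^ (-α) * Real.Gamma (1 + α)) := by
  have hpos : ∀ k ∈ s, (0 : ℝ) < n k := fun k hk => Nat.cast_pos.mpr (hn k hk)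
  simp_rw [Real.exp_neg_pow]
  rw [integral_finsetSum _ fun k hk =>
    (integrableOn_exp_neg_mul_rpow_inv hα (hpos k hk)).const_mul (a k)]
  refine Finset.sum_congr rfl fun k hk => ?_
  rw [integral_const_mul, integral_exp_neg_mul_rpow_inv hα (hpos k hk)]

section Expectation

variable {Ω : Type*} [MeasurableSpace Ω] {P : Measure Ω} {X : Ω → ℝ}

lemma integrable_exp_neg_mul [IsFiniteMeasure P] (hXm : Measurable X) (hX : ∀ᵐ ω ∂P, 0 ≤ X ω)
    {t : ℝ} (ht : 0 ≤ t) : Integrable (fun ω => Real.exp (-t * X ω)) P := by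
  refine (integrable_const (1 : ℝ)).mono' (hXm.const_mul _).exp.aestronglyMeasurable ?_
  filter_upwards [hX] with ω hω
  rw [Real.norm_eq_abs, abs_of_pos (Real.exp_pos _), Real.exp_le_one_iff, neg_mul,
    neg_nonpos]
  exact mul_nonneg ht hω

lemma integral_sum_mul_exp_neg_mul_pow [IsFiniteMeasure P] (hXm : Measurable X)
    (hX : ∀ᵐ ω ∂P, 0 ≤ X ω) {ι : Type*} (s : Finset ι) (a : ι → ℝ) (n : ι → ℕ)
    {t : ℝ} (ht : 0 ≤ t) :
    ∫ ω, ∑ k ∈ s, a k * Real.exp (-t * X ω) ^ n k ∂P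
      = ∑ k ∈ s, a k * ∫ ω, Real.exp (-(n k * t) * X ω) ∂P := by
  have hpow : ∀ ω k, Real.exp (-t * X ω) ^ n k = Real.exp (-(n k * t) * X ω) := fun ω k => by
    rw [neg_mul, Real.exp_neg_pow, neg_mul, mul_assoc]
  simp_rw [hpow]
  rw [integral_finsetSum _ fun k _ =>
    (integrable_exp_neg_mul hXm hX (mul_nonneg (n k).cast_nonneg ht)).const_mul (a k)]
  simp_rw [integral_const_mul]

end Expectation

theorem stmt_18_general {Ω : Type*} [MeasurableSpace Ω] (P : Measure Ω) [IsProbabilityMeasure P]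
    (X : Ω → ℝ) (hXm : Measurable X) (hX : ∀ᵐ ω ∂P, 0 ≤ X ω)
    (α A : ℝ) (hα : 0 < α)
    (h : Tendsto (fun lam : ℝ => lam ^ α * ∫ ω, Real.exp (-lam * X ω) ∂P) atTop (nhds A))
    (m : ℕ) (a : Fin m → ℝ) :
    Tendsto (fun lam : ℝ =>
        lam ^ α * ∫ ω, (∑ k : Fin m, a k * Real.exp (-lam * X ω) ^ ((k : ℕ) + 1)) ∂P)
      atTop
      (nhds (A / Real.Gamma (1 + α) *
        ∫ v in Set.Ioi (0 : ℝ), ∑ k : Fin m, a k * Real.exp (-(v ^ (1 / α))) ^ ((k : ℕ) + 1))) := by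
  have hΓ : Real.Gamma (1 + α) ≠ 0 := (Real.Gamma_pos_of_pos (by linarith)).ne'
  have hlimit : A / Real.Gamma (1 + α) *
      ∫ v in Set.Ioi (0 : ℝ), ∑ k : Fin m, a k * Real.exp (-(v ^ (1 / α))) ^ ((k : ℕ) + 1)
      = ∑ k : Fin m, a k * (((k : ℕ) + 1 : ℕ) ^ (-α) * A) := by
    rw [integral_sum_mul_exp_neg_rpow_inv_pow _ a (fun k _ => (k : ℕ).succ_pos) hα, Finset.mul_sum]
    refine Finset.sum_congr rfl fun k _ => ?_
    field_simp
  rw [hlimit]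
  refine (tendsto_finsetSum Finset.univ fun (k : Fin m) _ => (tendsto_rpow_mul_comp_const_mul
    (Nat.cast_pos.mpr (k : ℕ).succ_pos) h).const_mul (a k)).congr' ?_
  filter_upwards [eventually_ge_atTop 0] with t ht
  rw [integral_sum_mul_exp_neg_mul_pow hXm hX _ a (fun k => (k : ℕ) + 1) ht, Finset.mul_sum]
  refine Finset.sum_congr rfl fun k _ => ?_
  ring

theorem stmt_18 {Ω : Type*} [MeasurableSpace Ω] (P : Measure Ω) [IsProbabilityMeasure P]
    (X : Ω → ℝ) (hXm : Measurable X) (hX : ∀ᵐ ω ∂P, 0 ≤ X ω)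
    (α A : ℝ) (hα : 0 < α) (hA : 0 ≤ A)
    (h : Tendsto (fun lam : ℝ => lam ^ α * ∫ ω, Real.exp (-lam * X ω) ∂P) atTop (nhds A))
    (m : ℕ) (hm : 1 ≤ m) (a : Fin m → ℝ) :
    Tendsto (fun lam : ℝ =>
        lam ^ α * ∫ ω, (∑ k : Fin m, a k * Real.exp (-lam * X ω) ^ ((k : ℕ) + 1)) ∂P)
      atTop
      (nhds (A / Real.Gamma (1 + α) *
        ∫ v in Set.Ioi (0 : ℝ), ∑ k : Fin m, a k * Real.exp (-(v ^ (1 / α))) ^ ((k : ℕ) + 1))) :=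
  stmt_18_general P X hXm hX α A hα h m a
end
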